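/- arXiv:1905.00791 — 3 statements merged into one kernel-verified Lean document; each statement's English description precedes it below -/
import Mathlib

section
/- Every perfect matching M on a set P of n ≥ 4 points in the plane in convex position (and in general position) can be transformed, by at most one flip, into a perfect matching that contains a boundary edge, i.e., an edge {p,q} such that all points of P \ {p,q} lie strictly on one side of the line through p and q. -/
open EuclideanGeometry Real

noncomputable section

/-- Points of the Euclidean plane. -/
abbrev Pt : Type := EuclideanSpace ℝ (Fin 2)

/-- Two closed segments `ab` and `cd` on four distinct points *cross* if their open
segments have a common point. -/
def SegCross (a b c d : Pt) : Prop :=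
  a ≠ b ∧ a ≠ c ∧ a ≠ d ∧ b ≠ c ∧ b ≠ d ∧ c ≠ d ∧
    (openSegment ℝ a b ∩ openSegment ℝ c d).Nonempty

/-- `M` is a perfect matching on the point set `P`: a set of non-degenerate unordered
pairs (edges) of points of `P` such that every point of `P` lies in exactly one edge. -/
def IsPM (P : Finset Pt) (M : Set (Sym2 Pt)) : Prop :=
  (∀ e ∈ M, ¬ e.IsDiag) ∧
  (∀ e ∈ M, ∀ p ∈ e, p ∈ P) ∧
  (∀ p ∈ P, ∃! e, e ∈ M ∧ p ∈ e)

/-- Two unordered edges cross. -/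
def EdgeCross (e f : Sym2 Pt) : Prop :=
  ∃ a b c d : Pt, e = s(a, b) ∧ f = s(c, d) ∧ SegCross a b c d

/-- A matching is plane if no two of its edges cross. -/
def PlaneM (M : Set (Sym2 Pt)) : Prop :=
  ∀ e ∈ M, ∀ f ∈ M, ¬ EdgeCross e f

/-- `M'` is obtained from `M` by a single flip: two crossing edges `{a,b}`, `{c,d}`
are replaced by `{a,c}`, `{b,d}` or by `{a,d}`, `{b,c}`. -/
def Flip (M M' : Set (Sym2 Pt)) : Prop :=
  ∃ a b c d : Pt, s(a, b) ∈ M ∧ s(c, d) ∈ M ∧ SegCross a b c d ∧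
    (M' = (M \ {s(a, b), s(c, d)}) ∪ {s(a, c), s(b, d)} ∨
     M' = (M \ {s(a, b), s(c, d)}) ∪ {s(a, d), s(b, c)})

/-- `M` can be transformed into a plane matching by at most `k` flips. -/
def FlipsToPlane (M : Set (Sym2 Pt)) (k : ℕ) : Prop :=
  ∃ (j : ℕ) (g : ℕ → Set (Sym2 Pt)), j ≤ k ∧ g 0 = M ∧
    (∀ i < j, Flip (g i) (g (i + 1))) ∧ PlaneM (g j)

/-- No three distinct points of `P` are collinear. -/
def GenPos (P : Set Pt) : Prop :=
  ∀ p ∈ P, ∀ q ∈ P, ∀ r ∈ P, p ≠ q → p ≠ r → q ≠ r →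
    ¬ Collinear ℝ ({p, q, r} : Set Pt)

/-- `P` is in convex position: no point lies in the convex hull of the others. -/
def ConvexPos (P : Set Pt) : Prop :=
  ∀ p ∈ P, p ∉ convexHull ℝ (P \ {p})

/-- `{p, q}` is a boundary edge of `P`: all other points of `P` lie strictly on one
side of the line through `p` and `q`. -/
def BoundaryEdge (P : Set Pt) (p q : Pt) : Prop :=
  p ≠ q ∧ ∀ x ∈ P \ {p, q}, ∀ y ∈ P \ {p, q},
    (affineSpan ℝ ({p, q} : Set Pt)).SSameSide x y


/-!
Orient each edge of `M` and pick an oriented edge `ab` with the fewest points of `P` strictly to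
its right. If there are none, `ab` is a boundary edge. Otherwise let `s` be the neighbour of `a` on
the convex hull on that side (found by gift wrapping), so that `as` is a boundary edge. In convex
position the line of one chord separates the endpoints of another chord iff the converse holds;
hence if the partner `t` of `s` also lay right of `ab`, the chord `st` would not separate `a` from
`b`, and one orientation of `st` would have strictly fewer points to its right than `ab`. So `t`
lies left of `ab`, the edges `ab` and `st` cross, and flipping them to `as`, `bt` creates the
boundary edge `as`.
-/

/-- Twice the signed area of the triangle `pqr`: positive iff `r` lies to the left of the directed
line `pq`. -/
def orient (p q r : Pt) : ℝ := (q 0 - p 0) * (r 1 - p 1) - (q 1 - p 1) * (r 0 - p 0)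

lemma orient_swap_left (p q r : Pt) : orient q p r = -orient p q r := by
  simp only [orient]; ring

lemma orient_swap_right (p q r : Pt) : orient p r q = -orient p q r := by
  simp only [orient]; ring

lemma orient_rotate (p q r : Pt) : orient q r p = orient p q r := by
  simp only [orient]; ring

lemma ne_of_orient_ne_zero {p q r : Pt} (h : orient p q r ≠ 0) : p ≠ q ∧ p ≠ r ∧ q ≠ r := by
  refine ⟨?_, ?_, ?_⟩ <;> rintro rfl <;> simp [orient] at h
  exact h (by ring)

lemma orient_eq_zero_of_collinear {p q r : Pt} (h : Collinear ℝ ({p, q, r} : Set Pt)) :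
    orient p q r = 0 := by
  obtain ⟨v, hv⟩ := (collinear_iff_of_mem (Set.mem_insert p _)).1 h
  obtain ⟨s, rfl⟩ := hv q (by simp)
  obtain ⟨t, rfl⟩ := hv r (by simp)
  simp only [orient, vadd_eq_add, PiLp.add_apply, PiLp.smul_apply, smul_eq_mul]; ring

lemma exists_vsub_eq_orient_smul {p q : Pt} (hpq : p ≠ q) :
    ∃ m : Pt, ∀ r, ∃ z ∈ line[ℝ, p, q], r -ᵥ z = orient p q r • m := by
  set N := (q 0 - p 0) ^ 2 + (q 1 - p 1) ^ 2
  have hN : N ≠ 0 := by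
    intro h0
    apply hpq
    ext i; fin_cases i <;> simp <;> nlinarith [sq_nonneg (q 0 - p 0), sq_nonneg (q 1 - p 1)]
  refine ⟨N⁻¹ • !₂[p 1 - q 1, q 0 - p 0], fun r => ?_⟩
  refine ⟨(((r 0 - p 0) * (q 0 - p 0) + (r 1 - p 1) * (q 1 - p 1)) / N) • (q -ᵥ p) +ᵥ p,
    smul_vsub_vadd_mem_affineSpan_pair _ _ _, ?_⟩
  ext i; fin_cases i <;> (simp [orient]; field_simp; ring)

lemma collinear_iff_orient_eq_zero {p q r : Pt} (hpq : p ≠ q) :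
    Collinear ℝ ({p, q, r} : Set Pt) ↔ orient p q r = 0 := by
  refine ⟨orient_eq_zero_of_collinear, fun h => ?_⟩
  obtain ⟨m, hm⟩ := exists_vsub_eq_orient_smul hpq
  obtain ⟨z, hz, hrz⟩ := hm r
  rw [h, zero_smul, vsub_eq_zero_iff_eq] at hrz
  subst hrz
  have := collinear_insert_of_mem_affineSpan_pair hz
  rwa [Set.insert_comm r, Set.pair_comm r] at this

lemma sSameSide_of_orient_pos {p q x y : Pt} (hpq : p ≠ q)
    (hx : 0 < orient p q x) (hy : 0 < orient p q y) :
    line[ℝ, p, q].SSameSide x y := by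
  have not_mem : ∀ r, 0 < orient p q r → r ∉ line[ℝ, p, q] := fun r hr hmem =>
    hr.ne' (orient_eq_zero_of_collinear (by
      rw [← Set.pair_comm r q, ← Set.insert_comm r p]
      exact collinear_insert_of_mem_affineSpan_pair hmem))
  obtain ⟨m, hm⟩ := exists_vsub_eq_orient_smul hpq
  obtain ⟨z₁, hz₁, hx₁⟩ := hm x
  obtain ⟨z₂, hz₂, hy₂⟩ := hm y
  exact AffineSubspace.sSameSide_of_vsub_eq_smul hz₁ hz₂ hx₁ hy₂ (by positivity)
    (not_mem x hx) (not_mem y hy)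

lemma segCross_of_orient {a b c d : Pt} (hcd : orient a b c * orient a b d < 0)
    (hab : orient c d a * orient c d b < 0) : SegCross a b c d := by
  obtain ⟨hab₁, hac, hbc⟩ := ne_of_orient_ne_zero (left_ne_zero_of_mul hcd.ne)
  obtain ⟨-, had, hbd⟩ := ne_of_orient_ne_zero (right_ne_zero_of_mul hcd.ne)
  obtain ⟨hcd₁, -, -⟩ := ne_of_orient_ne_zero (left_ne_zero_of_mul hab.ne)
  refine ⟨hab₁, hac, had, hbc, hbd, hcd₁, ?_⟩
  set A := orient c d a
  set B := orient c d b
  set C := orient a b c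
  set D := orient a b d
  have key : (C - D) • (A • b - B • a) = (A - B) • (C • d - D • c) := by
    ext i; fin_cases i <;> (simp [A, B, C, D, orient]; ring)
  clear_value A B C D
  have hA : A ≠ 0 := left_ne_zero_of_mul hab.ne
  have hC : C ≠ 0 := left_ne_zero_of_mul hcd.ne
  have hAB : A - B ≠ 0 := fun h => by
    rw [show B = A by linarith] at hab; linarith [mul_self_nonneg A]
  have hCD : C - D ≠ 0 := fun h => by
    rw [show D = C by linarith] at hcd; linarith [mul_self_nonneg C]
  refine ⟨_, mem_openSegment_iff_div.2 ⟨-(A * B), A ^ 2, by linarith, by positivity, rfl⟩,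
    mem_openSegment_iff_div.2 ⟨-(C * D), C ^ 2, by linarith, by positivity, ?_⟩⟩
  have hA' : -(A * B) + A ^ 2 = A * (A - B) := by ring
  have hC' : -(C * D) + C ^ 2 = C * (C - D) := by ring
  ext i
  have ki := congrArg (· i) key
  simp only [PiLp.smul_apply, PiLp.sub_apply, PiLp.add_apply, smul_eq_mul] at ki ⊢
  rw [hA', hC']
  field_simp
  linear_combination -ki

lemma orient_smul_eq_add (w p q r : Pt) :
    (orient w p q + orient w q r + orient w r p) • w =
      orient w p q • r + orient w q r • p + orient w r p • q := by
  ext i; fin_cases i <;> (simp [orient]; ring)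

lemma mem_convexHull_of_smul_eq {E : Type*} [AddCommGroup E] [Module ℝ E] {w p q r : E}
    {x y z : ℝ} (hxy : 0 < x * y) (hyz : 0 < y * z)
    (h : (x + y + z) • w = x • p + y • q + z • r) : w ∈ convexHull ℝ {p, q, r} := by
  wlog hx : 0 < x generalizing x y z
  · refine this (x := -x) (y := -y) (z := -z) (by linarith) (by linarith) ?_ ?_
    · linear_combination (norm := module) -h
    · exact neg_pos.2 ((not_lt.1 hx).lt_of_ne (left_ne_zero_of_mul hxy.ne'))
  have hy : 0 < y := pos_of_mul_pos_right hxy hx.le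
  have hz : 0 < z := pos_of_mul_pos_right hyz hy.le
  have hw : w = Finset.univ.centerMass ![x, y, z] ![p, q, r] := by
    rw [Finset.centerMass, eq_inv_smul_iff₀ (by simp [Fin.sum_univ_three]; positivity)]
    simpa [Fin.sum_univ_three, add_assoc] using h
  rw [hw]
  refine Finset.centerMass_mem_convexHull _ ?_ (by simp [Fin.sum_univ_three]; positivity) ?_
  · intro i _; fin_cases i <;> simp <;> positivity
  · intro i _; fin_cases i <;> simp

section Position

variable {P : Set Pt}

lemma GenPos.orient_ne_zero (hgp : GenPos P) {p q r : Pt} (hp : p ∈ P) (hq : q ∈ P) (hr : r ∈ P)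
    (hpq : p ≠ q) (hpr : p ≠ r) (hqr : q ≠ r) : orient p q r ≠ 0 :=
  fun h => hgp p hp q hq r hr hpq hpr hqr ((collinear_iff_orient_eq_zero hpq).2 h)

/-- The orientations of `wpq`, `wqr`, `wrp` agree exactly when `w` lies inside the triangle
`pqr`. -/
lemma ConvexPos.not_orient_same_sign (hcv : ConvexPos P) {w p q r : Pt}
    (hw : w ∈ P) (hp : p ∈ P) (hq : q ∈ P) (hr : r ∈ P) :
    ¬ (0 < orient w p q * orient w q r ∧ 0 < orient w q r * orient w r p) := by
  rintro ⟨h₁, h₂⟩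
  obtain ⟨hwp, hwq, -⟩ := ne_of_orient_ne_zero (left_ne_zero_of_mul h₁.ne')
  obtain ⟨-, hwr, -⟩ := ne_of_orient_ne_zero (right_ne_zero_of_mul h₁.ne')
  refine hcv w hw (convexHull_mono ?_
    (mem_convexHull_of_smul_eq h₁ h₂ (orient_smul_eq_add w p q r)))
  rintro x (rfl | rfl | rfl) <;> simp [*, Ne.symm]

/-- In convex position the line `ab` separates `c` from `d` iff the line `cd` separates `a` from
`b`: an odd number of negative factors would put one of the four points inside the triangle of the
other three. -/
lemma ConvexPos.orient_mul_pos (hcv : ConvexPos P) (hgp : GenPos P) {a b c d : Pt}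
    (ha : a ∈ P) (hb : b ∈ P) (hc : c ∈ P) (hd : d ∈ P)
    (hc₀ : orient a b c ≠ 0) (hd₀ : orient a b d ≠ 0) (hcd : c ≠ d) :
    0 < orient a b c * orient a b d * (orient c d a * orient c d b) := by
  obtain ⟨-, hac, hbc⟩ := ne_of_orient_ne_zero hc₀
  obtain ⟨-, had, hbd⟩ := ne_of_orient_ne_zero hd₀
  have ha₀ := hgp.orient_ne_zero hc hd ha hcd hac.symm had.symm
  have hb₀ := hgp.orient_ne_zero hc hd hb hcd hbc.symm hbd.symm
  have h_a := hcv.not_orient_same_sign ha hb hc hd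
  have h_b := hcv.not_orient_same_sign hb ha hc hd
  have h_c := hcv.not_orient_same_sign hc ha hb hd
  have h_d := hcv.not_orient_same_sign hd ha hb hc
  rw [← orient_rotate a c d, orient_swap_right a b d] at h_a
  rw [orient_swap_left a b c, ← orient_rotate b c d, orient_rotate a b d] at h_b
  rw [orient_rotate b c a, orient_rotate a b c, orient_swap_right c d b] at h_c
  rw [orient_rotate b d a, orient_rotate a b d, orient_rotate c d b, orient_rotate a d c,
    orient_swap_right a c d, ← orient_rotate a c d] at h_d
  rcases hc₀.lt_or_gt with h₁ | h₁ <;> rcases hd₀.lt_or_gt with h₂ | h₂ <;>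
    rcases ha₀.lt_or_gt with h₃ | h₃ <;> rcases hb₀.lt_or_gt with h₄ | h₄ <;>
    simp only [mul_pos_iff, mul_neg_iff, neg_pos, neg_lt_zero, h₁, h₂, h₃, h₄, h₁.asymm, h₂.asymm,
      h₃.asymm, h₄.asymm, and_self, and_true, and_false, or_false, or_true, not_true,
      not_false_eq_true] at h_a h_b h_c h_d ⊢

lemma ConvexPos.segCross_of_orient_neg_of_pos (hcv : ConvexPos P) (hgp : GenPos P) {a b s t : Pt}
    (ha : a ∈ P) (hb : b ∈ P) (hs : s ∈ P) (ht : t ∈ P)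
    (hs' : orient a b s < 0) (ht' : 0 < orient a b t) : SegCross a b s t := by
  have hst : orient a b s * orient a b t < 0 := mul_neg_of_neg_of_pos hs' ht'
  refine segCross_of_orient hst (neg_of_mul_pos_right
    (hcv.orient_mul_pos hgp ha hb hs ht hs'.ne ht'.ne' ?_) hst.le)
  rintro rfl; linarith

lemma ConvexPos.orient_neg_trans (hcv : ConvexPos P) (hgp : GenPos P)
    {a s x y : Pt} (ha : a ∈ P) (hs : s ∈ P) (hx : x ∈ P) (hy : y ∈ P)
    (hsx : orient a s x < 0) (hxy : orient a x y < 0) : orient a s y < 0 := by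
  obtain ⟨has, -, -⟩ := ne_of_orient_ne_zero hsx.ne
  obtain ⟨-, hay, -⟩ := ne_of_orient_ne_zero hxy.ne
  have hsy : s ≠ y := by rintro rfl; rw [orient_swap_right] at hxy; linarith
  refine (hgp.orient_ne_zero ha hs hy has hay hsy).lt_or_gt.resolve_right fun hys => ?_
  refine hcv.not_orient_same_sign ha hs hx hy
    ⟨mul_pos_of_neg_of_neg hsx hxy, mul_pos_of_neg_of_neg hxy ?_⟩
  rwa [orient_swap_right, neg_lt_zero]

end Position

section RightOf

open Finset

def rightOf (P : Finset Pt) (a b : Pt) : Finset Pt := P.filter (fun x => orient a b x < 0)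

variable {P : Finset Pt} {a b : Pt}

lemma mem_rightOf {x : Pt} : x ∈ rightOf P a b ↔ x ∈ P ∧ orient a b x < 0 := mem_filter

lemma left_notMem_rightOf : a ∉ rightOf P a b := by simp [mem_rightOf, orient]

lemma right_notMem_rightOf : b ∉ rightOf P a b := by simp [mem_rightOf, orient, mul_comm]

lemma boundaryEdge_of_rightOf_eq_empty (hgp : GenPos ↑P) (ha : a ∈ P) (hb : b ∈ P)
    (hab : a ≠ b) (h : rightOf P a b = ∅) : BoundaryEdge ↑P a b := by
  have pos : ∀ x ∈ (↑P : Set Pt) \ {a, b}, 0 < orient a b x := by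
    rintro x ⟨hx, hxab⟩
    simp only [Set.mem_insert_iff, Set.mem_singleton_iff, not_or] at hxab
    refine (hgp.orient_ne_zero ha hb hx hab (Ne.symm hxab.1) (Ne.symm hxab.2)).lt_or_gt
      |>.resolve_left fun hneg => ?_
    simpa [h] using mem_rightOf.2 ⟨hx, hneg⟩
  exact ⟨hab, fun x hx y hy => sSameSide_of_orient_pos hab (pos x hx) (pos y hy)⟩

lemma mem_rightOf_of_rightOf_eq_empty (hgp : GenPos ↑P) {s : Pt} (ha : a ∈ P) (hb : b ∈ P)
    (hs : s ∈ P) (hab : a ≠ b) (hsa : s ≠ a) (hs_empty : rightOf P a s = ∅)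
    (hne : rightOf P a b ≠ ∅) : s ∈ rightOf P a b := by
  have hsb : s ≠ b := by rintro rfl; exact hne hs_empty
  refine mem_rightOf.2 ⟨hs, (hgp.orient_ne_zero ha hb hs hab hsa.symm hsb.symm).lt_or_gt
    |>.resolve_right fun h => ?_⟩
  have : b ∈ rightOf P a s := mem_rightOf.2 ⟨hb, by rwa [orient_swap_right, neg_lt_zero]⟩
  simp [hs_empty] at this

lemma ConvexPos.exists_rightOf_eq_empty (hcv : ConvexPos ↑P) (hgp : GenPos ↑P)
    (ha : a ∈ P) (hb : b ∈ P) (hab : a ≠ b) : ∃ s ∈ P, s ≠ a ∧ rightOf P a s = ∅ := by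
  obtain ⟨s, hs, hmin⟩ := (P.erase a).exists_min_image (fun s => (rightOf P a s).card)
    ⟨b, mem_erase.2 ⟨hab.symm, hb⟩⟩
  obtain ⟨hsa, hsP⟩ := mem_erase.1 hs
  refine ⟨s, hsP, hsa, eq_empty_of_forall_notMem fun x hx => ?_⟩
  obtain ⟨hxP, hsx⟩ := mem_rightOf.1 hx
  have hsub : rightOf P a x ⊂ rightOf P a s := by
    refine (ssubset_iff_of_subset fun y hy => ?_).2 ⟨x, hx, right_notMem_rightOf⟩
    obtain ⟨hyP, hxy⟩ := mem_rightOf.1 hy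
    exact mem_rightOf.2 ⟨hyP, hcv.orient_neg_trans hgp ha hsP hxP hyP hsx hxy⟩
  have hxa : x ≠ a := (ne_of_orient_ne_zero hsx.ne).2.1.symm
  exact (hmin x (mem_erase.2 ⟨hxa, hxP⟩)).not_gt (card_lt_card hsub)

lemma ConvexPos.card_rightOf_lt (hcv : ConvexPos ↑P) (hgp : GenPos ↑P) {u v : Pt}
    (ha : a ∈ P) (hb : b ∈ P) (hu : u ∈ P) (hv : v ∈ P)
    (hu' : orient a b u < 0) (hv' : orient a b v < 0) (hav : 0 < orient u v a) :
    (rightOf P u v).card < (rightOf P a b).card := by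
  obtain ⟨hab, hau, hbu⟩ := ne_of_orient_ne_zero hu'.ne
  obtain ⟨huv, -, -⟩ := ne_of_orient_ne_zero hav.ne'
  have hbv : 0 < orient u v b := pos_of_mul_pos_right (pos_of_mul_pos_right
    (hcv.orient_mul_pos hgp ha hb hu hv hu'.ne hv'.ne huv)
    (mul_pos_of_neg_of_neg hu' hv').le) hav.le
  refine card_lt_card ((ssubset_iff_of_subset fun y hy => ?_).2
    ⟨u, mem_rightOf.2 ⟨hu, hu'⟩, left_notMem_rightOf⟩)
  obtain ⟨hyP, hy⟩ := mem_rightOf.1 hy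
  have hya : y ≠ a := by rintro rfl; linarith
  have hyb : y ≠ b := by rintro rfl; linarith
  refine mem_rightOf.2 ⟨hyP, (hgp.orient_ne_zero ha hb hyP hab hya.symm hyb.symm).lt_or_gt
    |>.resolve_right fun hby => ?_⟩
  have hyb' : orient a y b < 0 := by rwa [orient_swap_right, neg_lt_zero]
  have hyu := hcv.orient_neg_trans hgp ha hyP hb hu hyb' hu'
  have hyv := hcv.orient_neg_trans hgp ha hyP hb hv hyb' hv'
  have := hcv.orient_mul_pos hgp hu hv ha hyP hav.ne' hy.ne hya.symm
  nlinarith [mul_pos_of_neg_of_neg hyu hyv, mul_neg_of_pos_of_neg hav hy]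

end RightOf

section Matching

variable {P : Finset Pt} {M : Set (Sym2 Pt)}

lemma IsPM.mem_of_mem (hM : IsPM P M) {p q : Pt} (h : s(p, q) ∈ M) : p ∈ P :=
  hM.2.1 _ h p (Sym2.mem_mk_left p q)

lemma IsPM.ne_of_mem (hM : IsPM P M) {p q : Pt} (h : s(p, q) ∈ M) : p ≠ q :=
  fun hpq => hM.1 _ h (Sym2.mk_isDiag_iff.2 hpq)

lemma IsPM.exists_partner (hM : IsPM P M) {p : Pt} (hp : p ∈ P) : ∃ q, s(p, q) ∈ M := by
  obtain ⟨e, ⟨he, hpe⟩, -⟩ := hM.2.2 p hp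
  obtain ⟨q, rfl⟩ := Sym2.mem_iff_exists.1 hpe
  exact ⟨q, he⟩

lemma IsPM.eq_of_mem (hM : IsPM P M) {e f : Sym2 Pt} {x : Pt} (he : e ∈ M) (hf : f ∈ M)
    (hxe : x ∈ e) (hxf : x ∈ f) : e = f :=
  (hM.2.2 x (hM.2.1 e he x hxe)).unique ⟨he, hxe⟩ ⟨hf, hxf⟩

lemma IsPM.notMem_of_mem (hM : IsPM P M) {e : Sym2 Pt} {s t : Pt} (he : e ∈ M)
    (hst : s(s, t) ∈ M) (hs : s ∉ e) : t ∉ e :=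
  fun ht => hs (hM.eq_of_mem hst he (Sym2.mem_mk_right s t) ht ▸ Sym2.mem_mk_left s t)

lemma IsPM.exists_forall_card_rightOf_le (hM : IsPM P M) (hP : P.Nonempty) :
    ∃ a b, s(a, b) ∈ M ∧ ∀ u v, s(u, v) ∈ M → (rightOf P a b).card ≤ (rightOf P u v).card := by
  obtain ⟨p, hp⟩ := hP
  obtain ⟨q, hpq⟩ := hM.exists_partner hp
  obtain ⟨⟨a, b⟩, habM, hmin⟩ := (measure fun z : Pt × Pt => (rightOf P z.1 z.2).card).wf.has_min
    {z | s(z.1, z.2) ∈ M} ⟨(p, q), hpq⟩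
  exact ⟨a, b, habM, fun u v huv => not_lt.1 (hmin (u, v) huv)⟩

end Matching

lemma ConvexPos.orient_partner_pos {P : Finset Pt} {M : Set (Sym2 Pt)} (hcv : ConvexPos ↑P)
    (hgp : GenPos ↑P) (hM : IsPM P M) {a b s t : Pt} (habM : s(a, b) ∈ M)
    (hmin : ∀ u v, s(u, v) ∈ M → (rightOf P a b).card ≤ (rightOf P u v).card)
    (hs : s ∈ rightOf P a b) (hst : s(s, t) ∈ M) : 0 < orient a b t := by
  obtain ⟨hsP, hs'⟩ := mem_rightOf.1 hs
  obtain ⟨hab, has, hbs⟩ := ne_of_orient_ne_zero hs'.ne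
  have ha := hM.mem_of_mem habM
  have hb := hM.mem_of_mem (Sym2.eq_swap ▸ habM)
  have htP := hM.mem_of_mem (Sym2.eq_swap ▸ hst)
  obtain ⟨hta, htb⟩ : t ≠ a ∧ t ≠ b := by
    simpa using hM.notMem_of_mem habM hst (by simp [has.symm, hbs.symm])
  refine (hgp.orient_ne_zero ha hb htP hab hta.symm htb.symm).lt_or_gt.resolve_left fun ht => ?_
  rcases (hgp.orient_ne_zero hsP htP ha (hM.ne_of_mem hst) has.symm hta).lt_or_gt with h | h
  · refine (hmin t s (Sym2.eq_swap ▸ hst)).not_gt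
      (hcv.card_rightOf_lt hgp ha hb htP hsP ht hs' ?_)
    rwa [orient_swap_left, neg_pos]
  · exact (hmin s t hst).not_gt (hcv.card_rightOf_lt hgp ha hb hsP htP hs' ht h)

theorem stmt9_general (n : ℕ) (h4 : 4 ≤ n) (P : Finset Pt) (hcard : P.card = n)
    (hgp : GenPos ↑P) (hcv : ConvexPos ↑P)
    (M : Set (Sym2 Pt)) (hM : IsPM P M) :
    ∃ M' : Set (Sym2 Pt), (M' = M ∨ Flip M M') ∧
      ∃ p q : Pt, s(p, q) ∈ M' ∧ BoundaryEdge ↑P p q := by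
  classical
  obtain ⟨a, b, habM, hmin⟩ :=
    hM.exists_forall_card_rightOf_le (Finset.card_pos.1 (by omega))
  have ha := hM.mem_of_mem habM
  have hb := hM.mem_of_mem (Sym2.eq_swap ▸ habM)
  have hab := hM.ne_of_mem habM
  by_cases hempty : rightOf P a b = ∅
  · exact ⟨M, Or.inl rfl, a, b, habM, boundaryEdge_of_rightOf_eq_empty hgp ha hb hab hempty⟩
  obtain ⟨s, hsP, hsa, hs_empty⟩ := hcv.exists_rightOf_eq_empty hgp ha hb hab
  have hs : s ∈ rightOf P a b :=
    mem_rightOf_of_rightOf_eq_empty hgp ha hb hsP hab hsa hs_empty hempty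
  obtain ⟨t, hst⟩ := hM.exists_partner hsP
  have hcross : SegCross a b s t :=
    hcv.segCross_of_orient_neg_of_pos hgp ha hb hsP (hM.mem_of_mem (Sym2.eq_swap ▸ hst))
      (mem_rightOf.1 hs).2 (hcv.orient_partner_pos hgp hM habM hmin hs hst)
  exact ⟨_, Or.inr ⟨a, b, s, t, habM, hst, hcross, Or.inl rfl⟩, a, s, by simp,
    boundaryEdge_of_rightOf_eq_empty hgp ha hsP hsa.symm hs_empty⟩

/-- Every perfect matching on `n ≥ 4` points in convex (and general)
position can be transformed, by at most one flip, into a perfect matching containing a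
boundary edge. -/
theorem stmt9 (n : ℕ) (hn : Even n) (h4 : 4 ≤ n) (P : Finset Pt) (hcard : P.card = n)
    (hgp : GenPos ↑P) (hcv : ConvexPos ↑P)
    (M : Set (Sym2 Pt)) (hM : IsPM P M) :
    ∃ M' : Set (Sym2 Pt), (M' = M ∨ Flip M M') ∧
      ∃ p q : Pt, s(p, q) ∈ M' ∧ BoundaryEdge ↑P p q :=
  stmt9_general n h4 P hcard hgp hcv M hM
end
end

section
/- Let T be a geometric spanning tree on a finite point set P in the plane in general position, containing an edge {u,v} such that every other edge of T is incident to u or to v. Then T can be transformed into a plane spanning tree by at most min(deg(u), deg(v)) − 1 flips, where deg(x) denotes the degree of x in T; that is, f(T) ≤ min(deg(u), deg(v)) − 1. -/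
open EuclideanGeometry Real

noncomputable section

/-- A geometric graph (on vertices `V` placed in the plane by `pos`) is plane if no two
of its edges cross. -/
def TreePlane {V : Type} (pos : V → Pt) (T : SimpleGraph V) : Prop :=
  ∀ a b c d : V, T.Adj a b → T.Adj c d → ¬ SegCross (pos a) (pos b) (pos c) (pos d)

/-- `T'` is obtained from the spanning tree `T` by a single flip: two crossing edges
`{a,b}`, `{c,d}` are removed, and two edges on the same four points are added so that
the result is again a spanning tree. -/
def TreeFlip {V : Type} (pos : V → Pt) (T T' : SimpleGraph V) : Prop :=
  ∃ a b c d : V, T.Adj a b ∧ T.Adj c d ∧ SegCross (pos a) (pos b) (pos c) (pos d) ∧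
    ∃ e₁ e₂ : Sym2 V,
      e₁ ∈ ({s(a, c), s(a, d), s(b, c), s(b, d)} : Set (Sym2 V)) ∧
      e₂ ∈ ({s(a, c), s(a, d), s(b, c), s(b, d)} : Set (Sym2 V)) ∧ e₁ ≠ e₂ ∧
      T'.edgeSet = (T.edgeSet \ {s(a, b), s(c, d)}) ∪ {e₁, e₂} ∧ T'.IsTree

/-- `T` can be transformed into a plane spanning tree by at most `k` flips. -/
def TreeFlipsToPlane {V : Type} (pos : V → Pt) (T : SimpleGraph V) (k : ℕ) : Prop :=
  ∃ (j : ℕ) (g : ℕ → SimpleGraph V), j ≤ k ∧ g 0 = T ∧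
    (∀ i < j, TreeFlip pos (g i) (g (i + 1))) ∧ TreePlane pos (g j)


def det3 (p q r : Pt) : ℝ := (q 0 - p 0)*(r 1 - p 1) - (q 1 - p 1)*(r 0 - p 0)

lemma det3_affine (p q r s : Pt) (a b : ℝ) (h : a + b = 1) :
    det3 p q (a • r + b • s) = a * det3 p q r + b * det3 p q s := by
  simp only [det3, PiLp.add_apply, PiLp.smul_apply, smul_eq_mul]
  have hb : b = 1 - a := by linarith
  subst hb; ring

@[simp] lemma det3_self₁ (p q : Pt) : det3 p p q = 0 := by simp [det3]
@[simp] lemma det3_self₂ (p q : Pt) : det3 p q p = 0 := by simp [det3]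
@[simp] lemma det3_self₃ (p q : Pt) : det3 p q q = 0 := by simp only [det3]; ring

lemma pt_eq_of_coords {p q : Pt} (h0 : p 0 = q 0) (h1 : p 1 = q 1) : p = q := by
  ext i; fin_cases i <;> assumption

/-- From `det3 u a z = 0` and `u ≠ a`, `z` lies on the line through `u, a`. -/
lemma exists_param {u a z : Pt} (h : det3 u a z = 0) (hne : u ≠ a) :
    ∃ s : ℝ, z = (1 - s) • u + s • a := by
  simp only [det3] at h
  by_cases h0 : a 0 - u 0 ≠ 0
  · refine ⟨(z 0 - u 0)/(a 0 - u 0), ?_⟩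
    apply pt_eq_of_coords <;>
      simp only [PiLp.add_apply, PiLp.smul_apply, smul_eq_mul] <;>
      field_simp <;> nlinarith [h]
  · push_neg at h0
    have h1 : a 1 - u 1 ≠ 0 := by
      intro h1; exact hne (pt_eq_of_coords (by linarith) (by linarith))
    refine ⟨(z 1 - u 1)/(a 1 - u 1), ?_⟩
    apply pt_eq_of_coords <;>
      simp only [PiLp.add_apply, PiLp.smul_apply, smul_eq_mul] <;>
      field_simp <;> nlinarith [h]

/-- sign conditions for two determinants with a vanishing convex combination -/
lemma opp_sign_of_combo {e f D1 D2 : ℝ} (he : 0 < e) (hf : 0 < f)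
    (hsum : e * D1 + f * D2 = 0) (h1 : D1 ≠ 0) (h2 : D2 ≠ 0) : D1 * D2 < 0 := by
  rcases h1.lt_or_gt with h | h <;> rcases h2.lt_or_gt with h' | h' <;> nlinarith

/-- crossing implies determinant sign conditions -/
lemma segCross_to_det {u a v b : Pt}
    (h : (openSegment ℝ u a ∩ openSegment ℝ v b).Nonempty)
    (h1 : det3 u a v ≠ 0) (h2 : det3 u a b ≠ 0)
    (h3 : det3 v b u ≠ 0) (h4 : det3 v b a ≠ 0) :
    det3 u a v * det3 u a b < 0 ∧ det3 v b u * det3 v b a < 0 := by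
  obtain ⟨z, ⟨c, d, hc, hd, hcd, hz1⟩, ⟨e, f, he, hf, hef, hz2⟩⟩ := h
  have key1 : det3 u a z = 0 := by
    rw [← hz1, det3_affine _ _ _ _ _ _ hcd]; simp
  have key2 : det3 v b z = 0 := by
    rw [← hz2, det3_affine _ _ _ _ _ _ hef]; simp
  constructor
  · apply opp_sign_of_combo he hf _ h1 h2
    rw [← hz2, det3_affine _ _ _ _ _ _ hef] at key1; linarith [key1]
  · apply opp_sign_of_combo hc hd _ h3 h4
    rw [← hz1, det3_affine _ _ _ _ _ _ hcd] at key2; linarith [key2]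

/-- determinant sign conditions imply crossing -/
lemma det_to_segCross {u a v b : Pt}
    (hc1 : det3 u a v * det3 u a b < 0) (hc2 : det3 v b u * det3 v b a < 0) :
    SegCross u a v b := by
  have hua : u ≠ a := by rintro rfl; simp at hc1
  have huv : u ≠ v := by rintro rfl; simp at hc1
  have hub : u ≠ b := by rintro rfl; simp at hc2
  have hav : a ≠ v := by rintro rfl; simp at hc1
  have hab : a ≠ b := by rintro rfl; simp at hc2
  have hvb : v ≠ b := by rintro rfl; simp at hc2
  set D1 := det3 u a v with hD1
  set D2 := det3 u a b with hD2
  have hden : D1 - D2 ≠ 0 := by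
    intro hh
    have : D1 = D2 := by linarith
    rw [this] at hc1; nlinarith
  set t := D1 / (D1 - D2) with ht
  have htb : 0 < t ∧ t < 1 := by
    rcases mul_neg_iff.mp hc1 with ⟨p1, p2⟩ | ⟨p1, p2⟩
    · have hd : 0 < D1 - D2 := by linarith
      exact ⟨div_pos p1 hd, by rw [ht, div_lt_one hd]; linarith⟩
    · have hd : D1 - D2 < 0 := by linarith
      refine ⟨div_pos_of_neg_of_neg p1 hd, ?_⟩
      have h2 : (1:ℝ) - D1/(D1-D2) = (-D2)/(D1-D2) := by field_simp; ring
      nlinarith [div_pos_of_neg_of_neg (show -D2 < 0 by linarith) hd]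
  obtain ⟨ht0, ht1⟩ := htb
  set z : Pt := (1 - t) • v + t • b with hzdef
  have hz_vb : z ∈ openSegment ℝ v b := ⟨1 - t, t, by linarith, ht0, by ring, rfl⟩
  have hz_line : det3 u a z = 0 := by
    rw [hzdef, det3_affine _ _ _ _ _ _ (by ring : (1-t) + t = 1), ← hD1, ← hD2, ht]
    field_simp
    ring
  obtain ⟨s, hs⟩ := exists_param hz_line hua
  have hE : det3 v b z = 0 := by
    rw [hzdef, det3_affine _ _ _ _ _ _ (by ring : (1-t) + t = 1)]; simp
  have hEcomb : (1 - s) * det3 v b u + s * det3 v b a = 0 := by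
    rw [← det3_affine _ _ _ _ _ _ (by ring : (1-s) + s = 1), ← hs, hE]
  have hs0 : 0 < s ∧ s < 1 := by
    rcases mul_neg_iff.mp hc2 with ⟨p1, p2⟩ | ⟨p1, p2⟩ <;> constructor <;> nlinarith
  exact ⟨hua, huv, hub, hav, hab, hvb,
    ⟨z, ⟨1 - s, s, by linarith [hs0.2], hs0.1, by ring, hs.symm⟩, hz_vb⟩⟩

/-- The crossing relation (would the edge `u a` cross the edge `v b`). -/
def Cr (u v a b : Pt) : Prop :=
  det3 u a v * det3 u a b < 0 ∧ det3 v b u * det3 v b a < 0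

section coords
variable (u v : Pt)
def Xc (p : Pt) : ℝ := (p 0 - u 0)*(v 0 - u 0) + (p 1 - u 1)*(v 1 - u 1)
def Yc (p : Pt) : ℝ := det3 u v p
def Ec : ℝ := (v 0 - u 0)^2 + (v 1 - u 1)^2

lemma I1 (a : Pt) : det3 u a v = -(Yc u v a) := by simp only [det3, Yc]; ring
lemma I2 (a b : Pt) : Ec u v * det3 u a b = Xc u v a * Yc u v b - Yc u v a * Xc u v b := by
  simp only [det3, Yc, Xc, Ec]; ring
lemma I3 (b : Pt) : det3 v b u = Yc u v b := by simp only [det3, Yc]; ring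
lemma I4 (a b : Pt) :
    Ec u v * det3 v b a
      = (Xc u v b - Ec u v) * Yc u v a - Yc u v b * (Xc u v a - Ec u v) := by
  simp only [det3, Yc, Xc, Ec]; ring
end coords

lemma mul_right_pos_factor {E x y : ℝ} (hE : 0 < E) : x * y < 0 ↔ x * (E * y) < 0 := by
  constructor <;> intro h <;> nlinarith

/-- `Cr` in coordinates. -/
lemma cr_iff {u v : Pt} (hE : 0 < Ec u v) (a b : Pt) :
    Cr u v a b ↔
      (-(Yc u v a)) * (Xc u v a * Yc u v b - Yc u v a * Xc u v b) < 0 ∧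
      Yc u v b * ((Xc u v b - Ec u v) * Yc u v a - Yc u v b * (Xc u v a - Ec u v)) < 0 := by
  have e1 := I1 u v a
  have e2 := I2 u v a b
  have e3 := I3 u v b
  have e4 := I4 u v a b
  unfold Cr
  rw [e1, e3, ← e2, ← e4]
  constructor <;> rintro ⟨h1, h2⟩ <;> constructor <;> nlinarith [h1, h2, hE]

-- abstract one-sided conditions
section abstractQ
variable {xa ya xb yb xc yc E : ℝ}

lemma Q_same_side (hE : 0 < E) (hya : ya ≠ 0) (hyb : yb ≠ 0)
    (h1 : (-ya) * (xa * yb - ya * xb) < 0)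
    (h2 : yb * ((xb - E) * ya - yb * (xa - E)) < 0) : 0 < ya * yb := by
  rcases hya.lt_or_gt with hA | hA <;> rcases hyb.lt_or_gt with hB | hB
  · exact mul_pos_of_neg_of_neg hA hB
  · exfalso
    have hM : xa * yb - ya * xb < 0 := by nlinarith
    have hN : (xb - E) * ya - yb * (xa - E) < 0 := by nlinarith
    have hP : 0 < E * (yb - ya) := mul_pos hE (by linarith)
    nlinarith
  · exfalso
    have hM : 0 < xa * yb - ya * xb := by nlinarith
    have hN : 0 < (xb - E) * ya - yb * (xa - E) := by nlinarith
    have hP : E * (yb - ya) < 0 := mul_neg_of_pos_of_neg hE (by linarith)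
    nlinarith
  · exact mul_pos hA hB

lemma Q_trans (hE : 0 < E) (hya : ya ≠ 0) (hyb : yb ≠ 0) (hyc : yc ≠ 0)
    (h1 : (-ya) * (xa * yb - ya * xb) < 0)
    (h2 : yb * ((xb - E) * ya - yb * (xa - E)) < 0)
    (h3 : (-yb) * (xb * yc - yb * xc) < 0)
    (h4 : yc * ((xc - E) * yb - yc * (xb - E)) < 0) :
    (-ya) * (xa * yc - ya * xc) < 0 ∧
      yc * ((xc - E) * ya - yc * (xa - E)) < 0 := by
  have sab := Q_same_side hE hya hyb h1 h2
  have sbc := Q_same_side hE hyb hyc h3 h4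
  have keyM : (xa*yb - ya*xb)*yc + (xb*yc - yb*xc)*ya = (xa*yc - ya*xc)*yb := by ring
  have keyN : ((xb-E)*ya - yb*(xa-E))*yc + ((xc-E)*yb - yc*(xb-E))*ya
      = ((xc-E)*ya - yc*(xa-E))*yb := by ring
  rcases hya.lt_or_gt with hA | hA
  · have hB : yb < 0 := by nlinarith
    have hC : yc < 0 := by nlinarith
    have m1 : xa*yb - ya*xb < 0 := by nlinarith
    have m2 : xb*yc - yb*xc < 0 := by nlinarith
    have n1 : 0 < (xb-E)*ya - yb*(xa-E) := by nlinarith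
    have n2 : 0 < (xc-E)*yb - yc*(xb-E) := by nlinarith
    have hMac : xa*yc - ya*xc < 0 := by nlinarith [mul_pos_of_neg_of_neg m1 hC, mul_pos_of_neg_of_neg m2 hA]
    have hNac : 0 < (xc-E)*ya - yc*(xa-E) := by nlinarith [mul_neg_of_pos_of_neg n1 hC, mul_neg_of_pos_of_neg n2 hA]
    exact ⟨mul_neg_of_pos_of_neg (by linarith) hMac, mul_neg_of_neg_of_pos hC hNac⟩
  · have hB : 0 < yb := by nlinarith
    have hC : 0 < yc := by nlinarith
    have m1 : 0 < xa*yb - ya*xb := by nlinarith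
    have m2 : 0 < xb*yc - yb*xc := by nlinarith
    have n1 : (xb-E)*ya - yb*(xa-E) < 0 := by nlinarith
    have n2 : (xc-E)*yb - yc*(xb-E) < 0 := by nlinarith
    have hMac : 0 < xa*yc - ya*xc := by nlinarith [mul_pos m1 hC, mul_pos m2 hA]
    have hNac : (xc-E)*ya - yc*(xa-E) < 0 := by nlinarith [mul_neg_of_neg_of_pos n1 hC, mul_neg_of_neg_of_pos n2 hA]
    exact ⟨mul_neg_of_neg_of_pos (by linarith) hMac, mul_neg_of_pos_of_neg hC hNac⟩

lemma Q_irrefl : ¬ ((-ya) * (xa * ya - ya * xa) < 0) := by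
  have : xa * ya - ya * xa = 0 := by ring
  rw [this, mul_zero]; exact lt_irrefl 0
end abstractQ

/-- minimal element for a relation transitive/irreflexive on a finite set -/
lemma exists_rel_min {α : Type*} (r : α → α → Prop) (s : Finset α)
    (htrans : ∀ a ∈ s, ∀ b ∈ s, ∀ c ∈ s, r a b → r b c → r a c)
    (hirr : ∀ a ∈ s, ¬ r a a) (hs : s.Nonempty) :
    ∃ b ∈ s, ∀ x ∈ s, ¬ r b x := by
  classical
  induction s using Finset.strongInduction with
  | _ s ih =>
    obtain ⟨x, hx⟩ := hs
    by_cases hex : ∃ y ∈ s, r x y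
    · obtain ⟨y, hy, hr⟩ := hex
      set s' := s.filter (fun z => r x z) with hs'
      have hx' : x ∉ s' := by
        simp only [hs', Finset.mem_filter]
        exact fun h => hirr x hx h.2
      have hlt : s' ⊂ s := ⟨Finset.filter_subset _ _, fun hsub => hx' (hsub hx)⟩
      have hne : s'.Nonempty := ⟨y, by simp [hs', hy, hr]⟩
      have hsub := Finset.filter_subset (fun z => r x z) s
      obtain ⟨b, hb, hmin⟩ := ih s' hlt
        (fun a ha b hb c hc => htrans a (hsub ha) b (hsub hb) c (hsub hc))
        (fun a ha => hirr a (hsub ha)) hne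
      refine ⟨b, hsub hb, fun z hz hrz => ?_⟩
      have hxb : r x b := (Finset.mem_filter.mp hb).2
      exact hmin z (Finset.mem_filter.mpr ⟨hz, htrans x hx b (hsub hb) z hz hxb hrz⟩) hrz
    · push_neg at hex
      exact ⟨x, hx, hex⟩

section DoubleStar
open SimpleGraph
attribute [local instance] Classical.propDecidable
variable {P : Finset Pt}

abbrev Vx (P : Finset Pt) := {x : Pt // x ∈ P}

noncomputable def Sv (u v : Vx P) : Finset (Vx P) := (Finset.univ.erase u).erase v

noncomputable def dsEdges (u v : Vx P) (A : Finset (Vx P)) : Finset (Sym2 (Vx P)) :=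
  insert s(u,v) ((Sv u v).image fun w => if w ∈ A then s(u,w) else s(v,w))

noncomputable def DS (u v : Vx P) (A : Finset (Vx P)) : SimpleGraph (Vx P) :=
  SimpleGraph.fromEdgeSet ↑(dsEdges u v A)

variable {u v : Vx P} {A : Finset (Vx P)} {a b p q : Vx P}

lemma mem_Sv : a ∈ Sv u v ↔ a ≠ v ∧ a ≠ u := by
  simp [Sv, Finset.mem_erase]

lemma mem_dsEdges {e : Sym2 (Vx P)} :
    e ∈ dsEdges u v A ↔ e = s(u,v) ∨ (∃ w, w ∈ Sv u v ∧ w ∈ A ∧ e = s(u,w)) ∨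
      (∃ w, w ∈ Sv u v ∧ w ∉ A ∧ e = s(v,w)) := by
  simp only [dsEdges, Finset.mem_insert, Finset.mem_image]
  constructor
  · rintro (h | ⟨w, hw, hfe⟩)
    · exact Or.inl h
    · right; by_cases hwA : w ∈ A
      · exact Or.inl ⟨w, hw, hwA, by rw [← hfe, if_pos hwA]⟩
      · exact Or.inr ⟨w, hw, hwA, by rw [← hfe, if_neg hwA]⟩
  · rintro (h | ⟨w, hw, hwA, rfl⟩ | ⟨w, hw, hwA, rfl⟩)
    · exact Or.inl h
    · exact Or.inr ⟨w, hw, if_pos hwA⟩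
    · exact Or.inr ⟨w, hw, if_neg hwA⟩

lemma DS_adj : (DS u v A).Adj p q ↔ s(p,q) ∈ dsEdges u v A ∧ p ≠ q := by
  rw [DS, SimpleGraph.fromEdgeSet_adj, Finset.mem_coe]

lemma adj_uv (hne : u ≠ v) : (DS u v A).Adj u v :=
  DS_adj.mpr ⟨mem_dsEdges.mpr (Or.inl rfl), hne⟩

lemma adj_cases (h : (DS u v A).Adj p q) :
    ((p = u ∧ q = v) ∨ (p = v ∧ q = u)) ∨
      (∃ w, w ∈ Sv u v ∧ w ∈ A ∧ ((p = u ∧ q = w) ∨ (p = w ∧ q = u))) ∨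
      (∃ w, w ∈ Sv u v ∧ w ∉ A ∧ ((p = v ∧ q = w) ∨ (p = w ∧ q = v))) := by
  obtain ⟨hm, hpq⟩ := DS_adj.mp h
  rcases mem_dsEdges.mp hm with h1 | ⟨w, hw, hwA, he⟩ | ⟨w, hw, hwA, he⟩
  · exact Or.inl (Sym2.eq_iff.mp h1)
  · exact Or.inr (Or.inl ⟨w, hw, hwA, Sym2.eq_iff.mp he⟩)
  · exact Or.inr (Or.inr ⟨w, hw, hwA, Sym2.eq_iff.mp he⟩)

lemma adj_u_iff (hne : u ≠ v) (ha : a ∈ Sv u v) :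
    (DS u v A).Adj u a ↔ a ∈ A := by
  constructor
  · intro h
    rcases adj_cases h with (⟨h1, h2⟩ | ⟨h1, h2⟩) |
      ⟨w, hw, hwA, (⟨h1, h2⟩ | ⟨h1, h2⟩)⟩ | ⟨w, hw, hwA, (⟨h1, h2⟩ | ⟨h1, h2⟩)⟩
    · exact absurd h2 (mem_Sv.mp ha).1
    · exact absurd h1 hne
    · exact h2 ▸ hwA
    · exact absurd h1.symm (mem_Sv.mp hw).2
    · exact absurd h1 hne
    · exact absurd h1.symm (mem_Sv.mp hw).2
  · intro hA
    exact DS_adj.mpr ⟨mem_dsEdges.mpr (Or.inr (Or.inl ⟨a, ha, hA, rfl⟩)),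
      fun h => (mem_Sv.mp ha).2 h.symm⟩

lemma adj_v_iff (hne : u ≠ v) (ha : a ∈ Sv u v) :
    (DS u v A).Adj v a ↔ a ∉ A := by
  constructor
  · intro h
    rcases adj_cases h with (⟨h1, h2⟩ | ⟨h1, h2⟩) |
      ⟨w, hw, hwA, (⟨h1, h2⟩ | ⟨h1, h2⟩)⟩ | ⟨w, hw, hwA, (⟨h1, h2⟩ | ⟨h1, h2⟩)⟩
    · exact absurd h1.symm hne
    · exact absurd h2 (mem_Sv.mp ha).2
    · exact absurd h1.symm hne
    · exact absurd h1.symm (mem_Sv.mp hw).1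
    · exact fun hA => hwA (h2 ▸ hA)
    · exact absurd h1.symm (mem_Sv.mp hw).1
  · intro hA
    exact DS_adj.mpr ⟨mem_dsEdges.mpr (Or.inr (Or.inr ⟨a, ha, hA, rfl⟩)),
      fun h => (mem_Sv.mp ha).1 h.symm⟩

lemma DS_connected (hne : u ≠ v) : (DS u v A).Connected := by
  have hreach : ∀ w, (DS u v A).Reachable w u := by
    intro w
    by_cases h1 : w = u
    · subst h1; exact Reachable.refl _
    by_cases h2 : w = v
    · subst h2; exact (adj_uv hne).symm.reachable
    have hw : w ∈ Sv u v := mem_Sv.mpr ⟨h2, h1⟩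
    by_cases h3 : w ∈ A
    · exact ((adj_u_iff hne hw).mpr h3).symm.reachable
    · exact (((adj_v_iff hne hw).mpr h3).symm.reachable).trans (adj_uv hne).symm.reachable
  have : Nonempty (Vx P) := ⟨u⟩
  exact ⟨fun x y => (hreach x).trans (hreach y).symm⟩

lemma walk_closed {V' : Type*} {G : SimpleGraph V'} {R : Set V'}
    (hR : ∀ x ∈ R, ∀ y, G.Adj x y → y ∈ R) :
    ∀ {x y : V'}, G.Walk x y → x ∈ R → y ∈ R := by
  intro x y w
  induction w with
  | nil => exact id
  | cons h p ih => exact fun hx => ih (hR _ hx _ h)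

lemma reach_closed {V' : Type*} {G : SimpleGraph V'} {R : Set V'}
    (hR : ∀ x ∈ R, ∀ y, G.Adj x y → y ∈ R) {x y : V'}
    (h : G.Reachable x y) (hx : x ∈ R) : y ∈ R := by
  obtain ⟨w⟩ := h; exact walk_closed hR w hx

lemma DS_acyclic (hne : u ≠ v) (hAS : A ⊆ Sv u v) : (DS u v A).IsAcyclic := by
  rw [isAcyclic_iff_forall_adj_isBridge]
  intro p q hadj
  rw [SimpleGraph.isBridge_iff]
  intro hreach
  set G' : SimpleGraph (Vx P) := DS u v A \ SimpleGraph.fromEdgeSet {s(p,q)} with hG'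
  replace hreach : G'.Reachable p q := hreach
  have hG'adj : ∀ x y, G'.Adj x y → (DS u v A).Adj x y ∧ s(x,y) ≠ s(p,q) := by
    intro x y h
    rw [hG', SimpleGraph.sdiff_adj] at h
    refine ⟨h.1, fun hh => h.2 ?_⟩
    rw [SimpleGraph.fromEdgeSet_adj]
    exact ⟨by rw [hh]; exact rfl, h.1.ne⟩
  obtain ⟨hm, hpq⟩ := DS_adj.mp hadj
  rcases mem_dsEdges.mp hm with h1 | ⟨w, hw, hwA, he⟩ | ⟨w, hw, hwA, he⟩
  -- case e = s(u,v)
  · set R : Set (Vx P) := insert u {w | w ∈ A} with hR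
    have hclosed : ∀ x ∈ R, ∀ y, G'.Adj x y → y ∈ R := by
      intro x hx y hy
      obtain ⟨hy1, hy2⟩ := hG'adj x y hy
      have hy2' : s(x,y) ≠ s(u,v) := by rw [h1] at hy2; exact hy2
      rcases adj_cases hy1 with (⟨e1, e2⟩ | ⟨e1, e2⟩) |
        ⟨w, hw, hwA, (⟨e1, e2⟩ | ⟨e1, e2⟩)⟩ | ⟨w, hw, hwA, (⟨e1, e2⟩ | ⟨e1, e2⟩)⟩
      · exact absurd (by rw [e1, e2]) hy2'
      · exact absurd (by rw [e1, e2]; exact Sym2.eq_swap) hy2'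
      · exact Or.inr (e2 ▸ hwA)
      · exact e2 ▸ Or.inl rfl
      · exfalso
        rw [Set.mem_insert_iff] at hx
        rcases hx with hx | hx
        · exact hne (by rw [← hx, e1])
        · have hxA : x ∈ A := hx
          rw [e1] at hxA
          exact (mem_Sv.mp (hAS hxA)).1 rfl
      · exfalso
        rw [Set.mem_insert_iff] at hx
        rcases hx with hx | hx
        · exact (mem_Sv.mp hw).2 (by rw [← e1, hx])
        · exact hwA (by rw [← e1]; exact hx)
    have hpR : u ∈ R := Or.inl rfl
    have hqR : v ∉ R := by
      intro h
      rw [Set.mem_insert_iff] at h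
      rcases h with h | h
      · exact hne h.symm
      · exact (mem_Sv.mp (hAS h)).1 rfl
    rcases Sym2.eq_iff.mp h1 with ⟨e1, e2⟩ | ⟨e1, e2⟩
    · exact hqR (reach_closed hclosed (e1 ▸ e2 ▸ hreach) hpR)
    · exact hqR (reach_closed hclosed (e1 ▸ e2 ▸ hreach).symm hpR)
  -- case e = s(u,w), w ∈ A
  · set R : Set (Vx P) := {w} with hR
    have hclosed : ∀ x ∈ R, ∀ y, G'.Adj x y → y ∈ R := by
      intro x hx y hy
      obtain ⟨hy1, hy2⟩ := hG'adj x y hy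
      have hy2' : s(x,y) ≠ s(u,w) := by rw [he] at hy2; exact hy2
      have hxw : x = w := hx
      subst hxw
      exfalso
      rcases adj_cases hy1 with (⟨e1, e2⟩ | ⟨e1, e2⟩) |
        ⟨w', hw', hwA', (⟨e1, e2⟩ | ⟨e1, e2⟩)⟩ | ⟨w', hw', hwA', (⟨e1, e2⟩ | ⟨e1, e2⟩)⟩
      · exact (mem_Sv.mp hw).2 e1
      · exact (mem_Sv.mp hw).1 e1
      · exact (mem_Sv.mp hw).2 e1
      · exact hy2' (by rw [e1, e2]; exact Sym2.eq_swap)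
      · exact (mem_Sv.mp hw).1 e1
      · exact hwA' (e1 ▸ hwA)
    have hwu : u ∉ R := fun h => (mem_Sv.mp hw).2 (Set.mem_singleton_iff.mp h).symm
    rcases Sym2.eq_iff.mp he with ⟨e1, e2⟩ | ⟨e1, e2⟩
    · exact hwu (reach_closed hclosed (e1 ▸ e2 ▸ hreach).symm rfl)
    · exact hwu (reach_closed hclosed (e1 ▸ e2 ▸ hreach) rfl)
  -- case e = s(v,w), w ∉ A
  · set R : Set (Vx P) := {w} with hR
    have hclosed : ∀ x ∈ R, ∀ y, G'.Adj x y → y ∈ R := by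
      intro x hx y hy
      obtain ⟨hy1, hy2⟩ := hG'adj x y hy
      have hy2' : s(x,y) ≠ s(v,w) := by rw [he] at hy2; exact hy2
      have hxw : x = w := hx
      subst hxw
      exfalso
      rcases adj_cases hy1 with (⟨e1, e2⟩ | ⟨e1, e2⟩) |
        ⟨w', hw', hwA', (⟨e1, e2⟩ | ⟨e1, e2⟩)⟩ | ⟨w', hw', hwA', (⟨e1, e2⟩ | ⟨e1, e2⟩)⟩
      · exact (mem_Sv.mp hw).2 e1
      · exact (mem_Sv.mp hw).1 e1
      · exact (mem_Sv.mp hw).2 e1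
      · exact hwA (e1 ▸ hwA')
      · exact (mem_Sv.mp hw).1 e1
      · exact hy2' (by rw [e1, e2]; exact Sym2.eq_swap)
    have hwv : v ∉ R := fun h => (mem_Sv.mp hw).1 (Set.mem_singleton_iff.mp h).symm
    rcases Sym2.eq_iff.mp he with ⟨e1, e2⟩ | ⟨e1, e2⟩
    · exact hwv (reach_closed hclosed (e1 ▸ e2 ▸ hreach).symm rfl)
    · exact hwv (reach_closed hclosed (e1 ▸ e2 ▸ hreach) rfl)

lemma DS_isTree (hne : u ≠ v) (hAS : A ⊆ Sv u v) : (DS u v A).IsTree :=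
  ⟨DS_connected hne, DS_acyclic hne hAS⟩

lemma DS_edgeSet (hne : u ≠ v) (hAS : A ⊆ Sv u v) :
    (DS u v A).edgeSet = ↑(dsEdges u v A) := by
  rw [DS, SimpleGraph.edgeSet_fromEdgeSet]
  ext e
  simp only [Set.mem_diff, Finset.mem_coe, Set.mem_setOf_eq, and_iff_left_iff_imp]
  intro he
  rcases mem_dsEdges.mp he with h1 | ⟨w, hw, hwA, h1⟩ | ⟨w, hw, hwA, h1⟩ <;> subst h1 <;>
    rw [Sym2.mem_diagSet, Sym2.mk_isDiag_iff]
  · exact hne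
  · exact fun h => (mem_Sv.mp hw).2 h.symm
  · exact fun h => (mem_Sv.mp hw).1 h.symm

end DoubleStar

lemma collinear_of_det3 {p q r : Pt} (h : det3 p q r = 0) :
    Collinear ℝ ({p, q, r} : Set Pt) := by
  rw [collinear_iff_exists_forall_eq_smul_vadd]
  by_cases hpq : q = p
  · refine ⟨p, r - p, ?_⟩
    rintro x (rfl | rfl | rfl)
    · exact ⟨0, by simp⟩
    · exact ⟨0, by simp [hpq]⟩
    · exact ⟨1, by simp⟩
  · refine ⟨p, q - p, ?_⟩
    rintro x (rfl | rfl | rfl)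
    · exact ⟨0, by simp⟩
    · exact ⟨1, by simp⟩
    · simp only [det3] at h
      by_cases h0 : q 0 - p 0 ≠ 0
      · refine ⟨(x 0 - p 0)/(q 0 - p 0), ?_⟩
        apply pt_eq_of_coords <;>
          simp only [PiLp.add_apply, PiLp.smul_apply, PiLp.sub_apply, smul_eq_mul, vadd_eq_add] <;>
          field_simp <;> nlinarith [h]
      · push_neg at h0
        have h1 : q 1 - p 1 ≠ 0 := by
          intro h1
          exact hpq (pt_eq_of_coords (by linarith) (by linarith))
        refine ⟨(x 1 - p 1)/(q 1 - p 1), ?_⟩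
        apply pt_eq_of_coords <;>
          simp only [PiLp.add_apply, PiLp.smul_apply, PiLp.sub_apply, smul_eq_mul, vadd_eq_add] <;>
          field_simp <;> nlinarith [h]

-- ### symmetries of SegCross
lemma sc1 {a b c d : Pt} (h : SegCross a b c d) : SegCross b a c d := by
  obtain ⟨h1, h2, h3, h4, h5, h6, h7⟩ := h
  exact ⟨h1.symm, h4, h5, h2, h3, h6, by rwa [openSegment_symm] at h7⟩

lemma sc2 {a b c d : Pt} (h : SegCross a b c d) : SegCross a b d c := by
  obtain ⟨h1, h2, h3, h4, h5, h6, h7⟩ := h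
  exact ⟨h1, h3, h2, h5, h4, h6.symm, by rwa [openSegment_symm ℝ c d] at h7⟩

lemma sc3 {a b c d : Pt} (h : SegCross a b c d) : SegCross c d a b := by
  obtain ⟨h1, h2, h3, h4, h5, h6, h7⟩ := h
  exact ⟨h6, h2.symm, h4.symm, h3.symm, h5.symm, h1, by rwa [Set.inter_comm] at h7⟩

section DS2
attribute [local instance] Classical.propDecidable
variable {P : Finset Pt}

lemma val_ne {x y : Vx P} (h : x ≠ y) : x.1 ≠ y.1 :=
  fun hh => h (Subtype.coe_injective hh)

lemma det_ne_zero (hgp : GenPos ↑P) {x y z : Vx P} (hxy : x ≠ y) (hxz : x ≠ z)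
    (hyz : y ≠ z) : det3 x.1 y.1 z.1 ≠ 0 := by
  intro h
  exact hgp x.1 (Finset.mem_coe.mpr x.2) y.1 (Finset.mem_coe.mpr y.2) z.1
    (Finset.mem_coe.mpr z.2) (val_ne hxy) (val_ne hxz) (val_ne hyz) (collinear_of_det3 h)

lemma Ec_pos {u v : Vx P} (hne : u ≠ v) : 0 < Ec u.1 v.1 := by
  have h := val_ne hne
  rcases lt_or_ge 0 (Ec u.1 v.1) with h1 | h1
  · exact h1
  · exfalso
    apply h
    have h0 : (v.1 0 - u.1 0)^2 + (v.1 1 - u.1 1)^2 ≤ 0 := h1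
    apply (pt_eq_of_coords ?_ ?_) <;> nlinarith [sq_nonneg (v.1 0 - u.1 0), sq_nonneg (v.1 1 - u.1 1)]

variable {u v : Vx P}

lemma Yc_ne (hgp : GenPos ↑P) (hne : u ≠ v) {w : Vx P} (hw : w ∈ Sv u v) :
    Yc u.1 v.1 w.1 ≠ 0 :=
  det_ne_zero hgp hne (fun h => (mem_Sv.mp hw).2 h.symm) (fun h => (mem_Sv.mp hw).1 h.symm)

lemma crV_trans (hgp : GenPos ↑P) (hne : u ≠ v) {a b c : Vx P}
    (ha : a ∈ Sv u v) (hb : b ∈ Sv u v) (hc : c ∈ Sv u v)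
    (h1 : Cr u.1 v.1 a.1 b.1) (h2 : Cr u.1 v.1 b.1 c.1) : Cr u.1 v.1 a.1 c.1 := by
  have hE := Ec_pos hne
  rw [cr_iff hE] at h1 h2 ⊢
  exact Q_trans hE (Yc_ne hgp hne ha) (Yc_ne hgp hne hb) (Yc_ne hgp hne hc)
    h1.1 h1.2 h2.1 h2.2

lemma crV_irrefl (a : Vx P) : ¬ Cr u.1 v.1 a.1 a.1 := by
  intro h
  have := h.1
  rw [det3_self₃] at this
  simp at this

end DS2

-- ### TreeFlipsToPlane helpers
lemma tfp_zero {V : Type} {pos : V → Pt} {T : SimpleGraph V} (h : TreePlane pos T)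
    (k : ℕ) : TreeFlipsToPlane pos T k :=
  ⟨0, fun _ => T, Nat.zero_le k, rfl, fun i hi => absurd hi (Nat.not_lt_zero i), h⟩

lemma tfp_succ {V : Type} {pos : V → Pt} {T T' : SimpleGraph V} {k : ℕ}
    (hf : TreeFlip pos T T') (h : TreeFlipsToPlane pos T' k) :
    TreeFlipsToPlane pos T (k + 1) := by
  obtain ⟨j, g, hj, hg0, hflip, hplane⟩ := h
  refine ⟨j + 1, fun i => Nat.casesOn i T g, by omega, rfl, ?_, hplane⟩
  intro i hi
  cases i with
  | zero => show TreeFlip pos T (g 0); rw [hg0]; exact hf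
  | succ i => exact hflip i (by omega)

section DS3
attribute [local instance] Classical.propDecidable
open SimpleGraph
variable {P : Finset Pt} {u v a b : Vx P} {A : Finset (Vx P)}

lemma dsEdges_flip (hne : u ≠ v) (hAS : A ⊆ Sv u v) (ha : a ∈ A) (hb : b ∈ Sv u v)
    (hbA : b ∉ A) :
    (↑(dsEdges u v (insert b (A.erase a))) : Set (Sym2 (Vx P))) =
      ((↑(dsEdges u v A) : Set (Sym2 (Vx P))) \ {s(u,a), s(v,b)}) ∪ {s(u,b), s(v,a)} := by
  have haS : a ∈ Sv u v := hAS ha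
  have hav : a ≠ v := (mem_Sv.mp haS).1
  have hau : a ≠ u := (mem_Sv.mp haS).2
  have hbv : b ≠ v := (mem_Sv.mp hb).1
  have hbu : b ≠ u := (mem_Sv.mp hb).2
  have hab : a ≠ b := fun h => hbA (h ▸ ha)
  ext e
  simp only [Finset.mem_coe, Set.mem_union, Set.mem_diff, Set.mem_insert_iff,
    Set.mem_singleton_iff]
  constructor
  · intro he
    rcases mem_dsEdges.mp he with rfl | ⟨w, hw, hwA, rfl⟩ | ⟨w, hw, hwA, rfl⟩
    · -- e = s(u,v)
      left
      refine ⟨mem_dsEdges.mpr (Or.inl rfl), ?_⟩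
      rintro (h | h) <;> rcases Sym2.eq_iff.mp h with ⟨h1, h2⟩ | ⟨h1, h2⟩
      · exact hav h2.symm
      · exact hau h1.symm
      · exact hne h1
      · exact hbu h1.symm
    · -- e = s(u,w), w ∈ insert b (A.erase a)
      rcases Finset.mem_insert.mp hwA with rfl | hw'
      · right; left; rfl
      · obtain ⟨hwa, hwA'⟩ := Finset.mem_erase.mp hw'
        left
        refine ⟨mem_dsEdges.mpr (Or.inr (Or.inl ⟨w, hw, hwA', rfl⟩)), ?_⟩
        rintro (h | h) <;> rcases Sym2.eq_iff.mp h with ⟨h1, h2⟩ | ⟨h1, h2⟩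
        · exact hwa h2
        · exact hau h1.symm
        · exact hne h1
        · exact hbu h1.symm
    · -- e = s(v,w), w ∉ insert b (A.erase a)
      have hwb : w ≠ b := fun h => hwA (by rw [h]; exact Finset.mem_insert_self b _)
      by_cases hwa : w = a
      · subst hwa; right; right; rfl
      · have hwA' : w ∉ A := fun h =>
          hwA (Finset.mem_insert_of_mem (Finset.mem_erase.mpr ⟨hwa, h⟩))
        left
        refine ⟨mem_dsEdges.mpr (Or.inr (Or.inr ⟨w, hw, hwA', rfl⟩)), ?_⟩
        rintro (h | h) <;> rcases Sym2.eq_iff.mp h with ⟨h1, h2⟩ | ⟨h1, h2⟩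
        · exact hne h1.symm
        · exact hav h1.symm
        · exact hwb h2
        · exact hbv h1.symm
  · rintro (⟨he, hne2⟩ | h | h)
    · rcases mem_dsEdges.mp he with rfl | ⟨w, hw, hwA, rfl⟩ | ⟨w, hw, hwA, rfl⟩
      · exact mem_dsEdges.mpr (Or.inl rfl)
      · have hwa : w ≠ a := by
          rintro rfl; exact hne2 (Or.inl rfl)
        exact mem_dsEdges.mpr (Or.inr (Or.inl ⟨w, hw,
          Finset.mem_insert_of_mem (Finset.mem_erase.mpr ⟨hwa, hwA⟩), rfl⟩))
      · have hwb : w ≠ b := by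
          rintro rfl; exact hne2 (Or.inr rfl)
        have : w ∉ insert b (A.erase a) := by
          intro h
          rcases Finset.mem_insert.mp h with rfl | h'
          · exact hwb rfl
          · exact hwA (Finset.mem_erase.mp h').2
        exact mem_dsEdges.mpr (Or.inr (Or.inr ⟨w, hw, this, rfl⟩))
    · subst h
      exact mem_dsEdges.mpr (Or.inr (Or.inl ⟨b, hb, Finset.mem_insert_self b _, rfl⟩))
    · subst h
      have : a ∉ insert b (A.erase a) := by
        intro h
        rcases Finset.mem_insert.mp h with h' | h'
        · exact hab h'
        · exact (Finset.mem_erase.mp h').1 rfl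
      exact mem_dsEdges.mpr (Or.inr (Or.inr ⟨a, haS, this, rfl⟩))
end DS3

section DS4
attribute [local instance] Classical.propDecidable
open SimpleGraph
variable {P : Finset Pt} {u v a b : Vx P} {A : Finset (Vx P)}

lemma cross_shift {p q x y : Vx P} {c d : Pt} (h : s(p,q) = s(x,y))
    (hc : SegCross p.1 q.1 c d) : SegCross x.1 y.1 c d := by
  rcases Sym2.eq_iff.mp h with ⟨h1, h2⟩ | ⟨h1, h2⟩
  · subst h1; subst h2; exact hc
  · subst h1; subst h2; exact sc1 hc

lemma cross_shift2 {p q x y : Vx P} {c d : Pt} (h : s(p,q) = s(x,y))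
    (hc : SegCross c d p.1 q.1) : SegCross c d x.1 y.1 :=
  sc3 (cross_shift h (sc3 hc))

lemma plane_of_noConf (hgp : GenPos ↑P) (hne : u ≠ v) (hAS : A ⊆ Sv u v)
    (hnc : ∀ a ∈ A, ∀ b ∈ Sv u v, b ∉ A → ¬ Cr u.1 v.1 a.1 b.1) :
    TreePlane Subtype.val (DS u v A) := by
  intro p q r t h1 h2 hcross
  obtain ⟨hm1, -⟩ := DS_adj.mp h1
  obtain ⟨hm2, -⟩ := DS_adj.mp h2
  have hSne : ∀ {w : Vx P}, w ∈ Sv u v → w ≠ u ∧ w ≠ v :=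
    fun hw => ⟨(mem_Sv.mp hw).2, (mem_Sv.mp hw).1⟩
  rcases mem_dsEdges.mp hm1 with he1 | ⟨w1, hw1, hw1A, he1⟩ | ⟨w1, hw1, hw1A, he1⟩ <;>
    rcases mem_dsEdges.mp hm2 with he2 | ⟨w2, hw2, hw2A, he2⟩ | ⟨w2, hw2, hw2A, he2⟩ <;>
    have hc' := cross_shift2 he2 (cross_shift he1 hcross)
  · exact hc'.2.1 rfl
  · exact hc'.2.1 rfl
  · exact hc'.2.2.2.1 rfl
  · exact hc'.2.1 rfl
  · exact hc'.2.1 rfl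
  · -- real case : u-edge w1 ∈ A crosses v-edge w2 ∉ A
    refine hnc w1 hw1A w2 hw2 hw2A ?_
    have hw1w2 : w1 ≠ w2 := fun h => hc'.2.2.2.2.1 (congrArg Subtype.val h)
    have hd1 : det3 u.1 w1.1 v.1 ≠ 0 :=
      det_ne_zero hgp (fun h => (hSne hw1).1 h.symm) hne (hSne hw1).2
    have hd2 : det3 u.1 w1.1 w2.1 ≠ 0 :=
      det_ne_zero hgp (fun h => (hSne hw1).1 h.symm) (fun h => (hSne hw2).1 h.symm) hw1w2
    have hd3 : det3 v.1 w2.1 u.1 ≠ 0 :=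
      det_ne_zero hgp (fun h => (hSne hw2).2 h.symm) hne.symm (hSne hw2).1
    have hd4 : det3 v.1 w2.1 w1.1 ≠ 0 :=
      det_ne_zero hgp (fun h => (hSne hw2).2 h.symm) (hSne hw1).2.symm hw1w2.symm
    exact segCross_to_det hc'.2.2.2.2.2.2 hd1 hd2 hd3 hd4
  · exact hc'.2.2.1 rfl
  · -- real case, swapped
    have hc'' := sc3 hc'
    refine hnc w2 hw2A w1 hw1 hw1A ?_
    have hw1w2 : w2 ≠ w1 := fun h => hc''.2.2.2.2.1 (congrArg Subtype.val h)
    have hd1 : det3 u.1 w2.1 v.1 ≠ 0 :=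
      det_ne_zero hgp (fun h => (hSne hw2).1 h.symm) hne (hSne hw2).2
    have hd2 : det3 u.1 w2.1 w1.1 ≠ 0 :=
      det_ne_zero hgp (fun h => (hSne hw2).1 h.symm) (fun h => (hSne hw1).1 h.symm) hw1w2
    have hd3 : det3 v.1 w1.1 u.1 ≠ 0 :=
      det_ne_zero hgp (fun h => (hSne hw1).2 h.symm) hne.symm (hSne hw1).1
    have hd4 : det3 v.1 w1.1 w2.1 ≠ 0 :=
      det_ne_zero hgp (fun h => (hSne hw1).2 h.symm) (hSne hw2).2.symm hw1w2.symm
    exact segCross_to_det hc''.2.2.2.2.2.2 hd1 hd2 hd3 hd4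
  · exact hc'.2.1 rfl

lemma flip_DS (hgp : GenPos ↑P) (hne : u ≠ v) (hAS : A ⊆ Sv u v) (ha : a ∈ A)
    (hb : b ∈ Sv u v) (hbA : b ∉ A) (hcr : Cr u.1 v.1 a.1 b.1) :
    TreeFlip Subtype.val (DS u v A) (DS u v (insert b (A.erase a))) := by
  have haS : a ∈ Sv u v := hAS ha
  have hAS' : insert b (A.erase a) ⊆ Sv u v :=
    Finset.insert_subset_iff.mpr ⟨hb, (Finset.erase_subset _ _).trans hAS⟩
  have hsc : SegCross u.1 a.1 v.1 b.1 := det_to_segCross hcr.1 hcr.2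
  refine ⟨u, a, v, b, (adj_u_iff hne haS).mpr ha, (adj_v_iff hne hb).mpr hbA, hsc,
    s(u,b), s(a,v), ?_, ?_, ?_, ?_, DS_isTree hne hAS'⟩
  · exact Set.mem_insert_iff.mpr (Or.inr (Set.mem_insert _ _))
  · exact Set.mem_insert_iff.mpr (Or.inr (Set.mem_insert_iff.mpr
      (Or.inr (Set.mem_insert _ _))))
  · intro h
    rcases Sym2.eq_iff.mp h with ⟨h1, h2⟩ | ⟨h1, h2⟩
    · exact (mem_Sv.mp haS).2 h1.symm
    · exact hne h1
  · rw [DS_edgeSet hne hAS', DS_edgeSet hne hAS, dsEdges_flip hne hAS ha hb hbA]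
    have hswap : (s(a,v) : Sym2 (Vx P)) = s(v,a) := Sym2.eq_swap
    rw [hswap]
end DS4

section DS5
attribute [local instance] Classical.propDecidable
open SimpleGraph
variable {P : Finset Pt} {u v : Vx P}

lemma rec_main (hgp : GenPos ↑P) (hne : u ≠ v) :
    ∀ (n : ℕ) (A W : Finset (Vx P)), W.card ≤ n → A ⊆ Sv u v → W ⊆ A →
      (∀ x ∈ A, x ∉ W → ∀ r ∈ Sv u v, Cr u.1 v.1 x.1 r.1 → r ∈ A) →
      TreeFlipsToPlane Subtype.val (DS u v A) W.card := by
  intro n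
  induction n with
  | zero =>
    intro A W hWn hAS hWA hJ
    by_cases hc : ∃ a ∈ A, ∃ b ∈ Sv u v, b ∉ A ∧ Cr u.1 v.1 a.1 b.1
    · exfalso
      obtain ⟨a, haA, b0, hb0S, hb0A, hcr0⟩ := hc
      have haW : a ∈ W := by
        by_contra haW
        exact hb0A (hJ a haA haW b0 hb0S hcr0)
      have : W.card ≠ 0 := fun h => by
        rw [Finset.card_eq_zero] at h; exact absurd (h ▸ haW) (Finset.notMem_empty a)
      omega
    · push_neg at hc
      exact tfp_zero (plane_of_noConf hgp hne hAS
        (fun a ha b hb hbA => hc a ha b hb hbA)) _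
  | succ n ih =>
    intro A W hWn hAS hWA hJ
    by_cases hc : ∃ a ∈ A, ∃ b ∈ Sv u v, b ∉ A ∧ Cr u.1 v.1 a.1 b.1
    · obtain ⟨a, haA, b0, hb0S, hb0A, hcr0⟩ := hc
      have haS : a ∈ Sv u v := hAS haA
      have haW : a ∈ W := by
        by_contra haW
        exact hb0A (hJ a haA haW b0 hb0S hcr0)
      -- choose a minimal crossing partner b
      set cand : Finset (Vx P) :=
        (Sv u v).filter (fun r => r ∉ A ∧ Cr u.1 v.1 a.1 r.1) with hcand
      have hb0c : b0 ∈ cand := Finset.mem_filter.mpr ⟨hb0S, hb0A, hcr0⟩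
      have hcandS : ∀ x ∈ cand, x ∈ Sv u v := fun x hx => (Finset.mem_filter.mp hx).1
      obtain ⟨b, hbc, hbmin⟩ := exists_rel_min (fun x y => Cr u.1 v.1 x.1 y.1) cand
        (fun x hx y hy z hz h1 h2 =>
          crV_trans hgp hne (hcandS x hx) (hcandS y hy) (hcandS z hz) h1 h2)
        (fun x _ => crV_irrefl x) ⟨b0, hb0c⟩
      obtain ⟨hbS, hbA, hcrab⟩ := Finset.mem_filter.mp hbc
      have hab : a ≠ b := fun h => hbA (h ▸ haA)
      set A' := insert b (A.erase a) with hA'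
      set W' := W.erase a with hW'
      have hAS' : A' ⊆ Sv u v :=
        Finset.insert_subset_iff.mpr ⟨hbS, (Finset.erase_subset _ _).trans hAS⟩
      have hWA' : W' ⊆ A' := by
        intro x hx
        obtain ⟨hxa, hxW⟩ := Finset.mem_erase.mp hx
        exact Finset.mem_insert_of_mem (Finset.mem_erase.mpr ⟨hxa, hWA hxW⟩)
      have hJ' : ∀ x ∈ A', x ∉ W' → ∀ r ∈ Sv u v, Cr u.1 v.1 x.1 r.1 → r ∈ A' := by
        intro x hx hxW' r hrS hcr
        rcases Finset.mem_insert.mp hx with hxb | hx'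
        · -- x = b
          by_cases hrA' : r ∈ A'
          · exact hrA'
          · exfalso
            have hcrbr : Cr u.1 v.1 b.1 r.1 := by rw [← hxb]; exact hcr
            have hcrar : Cr u.1 v.1 a.1 r.1 :=
              crV_trans hgp hne haS hbS hrS hcrab hcrbr
            by_cases hrA : r ∈ A
            · have hra : r = a := by
                by_contra hra
                exact hrA' (Finset.mem_insert_of_mem (Finset.mem_erase.mpr ⟨hra, hrA⟩))
              rw [hra] at hcrar
              exact crV_irrefl a hcrar
            · exact hbmin r (Finset.mem_filter.mpr ⟨hrS, hrA, hcrar⟩) hcrbr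
        · obtain ⟨hxa, hxA⟩ := Finset.mem_erase.mp hx'
          have hxW : x ∉ W := fun hxW => hxW' (Finset.mem_erase.mpr ⟨hxa, hxW⟩)
          have hrA : r ∈ A := hJ x hxA hxW r hrS hcr
          have hra : r ≠ a := by
            rintro rfl
            have hxb : Cr u.1 v.1 x.1 b.1 :=
              crV_trans hgp hne (hAS hxA) haS hbS hcr hcrab
            exact hbA (hJ x hxA hxW b hbS hxb)
          exact Finset.mem_insert_of_mem (Finset.mem_erase.mpr ⟨hra, hrA⟩)
      have hW'card : W'.card + 1 = W.card := Finset.card_erase_add_one haW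
      have htfp := ih A' W' (by omega) hAS' hWA' hJ'
      have hflip := flip_DS hgp hne hAS haA hbS hbA hcrab
      have := tfp_succ hflip htfp
      rwa [hW'card] at this
    · push_neg at hc
      exact tfp_zero (plane_of_noConf hgp hne hAS
        (fun a ha b hb hbA => hc a ha b hb hbA)) _
end DS5

section DS6
attribute [local instance] Classical.propDecidable
open SimpleGraph

theorem half (P : Finset Pt) (hgp : GenPos ↑P) (T : SimpleGraph (Vx P)) (hT : T.IsTree)
    (u v : Vx P) (huv : T.Adj u v)
    (hstar : ∀ a b, T.Adj a b → a = u ∨ a = v ∨ b = u ∨ b = v) :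
    TreeFlipsToPlane Subtype.val T ((T.neighborSet u).ncard - 1) := by
  have hne : u ≠ v := huv.ne
  set A₀ : Finset (Vx P) := (Sv u v).filter (fun w => T.Adj u w) with hA₀
  -- no vertex is adjacent to both u and v
  have not_both : ∀ w, w ∈ Sv u v → T.Adj u w → T.Adj v w → False := by
    intro w hw huw hvw
    have hbr := (isAcyclic_iff_forall_adj_isBridge.mp hT.2) huw
    rw [SimpleGraph.isBridge_iff] at hbr
    apply hbr
    have h1 : (T \ SimpleGraph.fromEdgeSet {s(u,w)}).Adj u v := by
      rw [SimpleGraph.sdiff_adj]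
      refine ⟨huv, ?_⟩
      rw [SimpleGraph.fromEdgeSet_adj]
      rintro ⟨hh, -⟩
      rw [Set.mem_singleton_iff] at hh
      rcases Sym2.eq_iff.mp hh with ⟨-, h2⟩ | ⟨h2, -⟩
      · exact (mem_Sv.mp hw).1 h2.symm
      · exact (mem_Sv.mp hw).2 h2.symm
    have h2 : (T \ SimpleGraph.fromEdgeSet {s(u,w)}).Adj v w := by
      rw [SimpleGraph.sdiff_adj]
      refine ⟨hvw, ?_⟩
      rw [SimpleGraph.fromEdgeSet_adj]
      rintro ⟨hh, -⟩
      rw [Set.mem_singleton_iff] at hh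
      rcases Sym2.eq_iff.mp hh with ⟨h2, -⟩ | ⟨h2, -⟩
      · exact hne h2.symm
      · exact (mem_Sv.mp hw).1 h2.symm
    exact h1.reachable.trans h2.reachable
  -- every other vertex has a neighbour among u, v
  have has_nb : ∀ w, w ∈ Sv u v → T.Adj u w ∨ T.Adj v w := by
    intro w hw
    obtain ⟨wk⟩ := hT.1.preconnected w u
    cases wk with
    | nil => exact absurd rfl (mem_Sv.mp hw).2
    | @cons _ z _ h p =>
      rcases hstar w z h with h1 | h1 | h1 | h1
      · exact absurd h1 (mem_Sv.mp hw).2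
      · exact absurd h1 (mem_Sv.mp hw).1
      · subst h1; exact Or.inl h.symm
      · subst h1; exact Or.inr h.symm
  -- T is the double star DS u v A₀
  have Hu : ∀ q, T.Adj u q → (DS u v A₀).Adj u q := by
    intro q hq
    by_cases hqv : q = v
    · subst hqv; exact adj_uv hne
    · have hqS : q ∈ Sv u v := mem_Sv.mpr ⟨hqv, hq.ne'⟩
      exact (adj_u_iff hne hqS).mpr (Finset.mem_filter.mpr ⟨hqS, hq⟩)
  have Hv : ∀ q, T.Adj v q → (DS u v A₀).Adj v q := by
    intro q hq
    by_cases hqu : q = u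
    · subst hqu; exact (adj_uv hne).symm
    · have hqS : q ∈ Sv u v := mem_Sv.mpr ⟨hq.ne', hqu⟩
      refine (adj_v_iff hne hqS).mpr ?_
      intro h
      exact not_both q hqS (Finset.mem_filter.mp h).2 hq
  have Teq : T = DS u v A₀ := by
    refine SimpleGraph.ext ?_
    funext p q
    apply propext
    constructor
    · intro hpq
      rcases hstar p q hpq with h1 | h1 | h1 | h1
      · subst h1; exact Hu q hpq
      · subst h1; exact Hv q hpq
      · subst h1; exact (Hu p hpq.symm).symm
      · subst h1; exact (Hv p hpq.symm).symm
    · intro h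
      rcases adj_cases h with (⟨e1, e2⟩ | ⟨e1, e2⟩) |
        ⟨w, hw, hwA, (⟨e1, e2⟩ | ⟨e1, e2⟩)⟩ | ⟨w, hw, hwA, (⟨e1, e2⟩ | ⟨e1, e2⟩)⟩
      · rw [e1, e2]; exact huv
      · rw [e1, e2]; exact huv.symm
      · rw [e1, e2]; exact (Finset.mem_filter.mp hwA).2
      · rw [e1, e2]; exact (Finset.mem_filter.mp hwA).2.symm
      · rw [e1, e2]
        rcases has_nb w hw with hh | hh
        · exact absurd (Finset.mem_filter.mpr ⟨hw, hh⟩) hwA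
        · exact hh
      · rw [e1, e2]
        rcases has_nb w hw with hh | hh
        · exact absurd (Finset.mem_filter.mpr ⟨hw, hh⟩) hwA
        · exact hh.symm
  -- the degree count
  have hvA₀ : v ∉ A₀ := fun h => (mem_Sv.mp (Finset.filter_subset _ _ h)).1 rfl
  have hNset : T.neighborSet u = ↑(insert v A₀) := by
    ext w
    simp only [SimpleGraph.mem_neighborSet, Finset.coe_insert, Set.mem_insert_iff,
      Finset.mem_coe]
    constructor
    · intro hw
      by_cases hwv : w = v
      · exact Or.inl hwv
      · exact Or.inr (Finset.mem_filter.mpr ⟨mem_Sv.mpr ⟨hwv, hw.ne'⟩, hw⟩)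
    · rintro (rfl | hw)
      · exact huv
      · exact (Finset.mem_filter.mp hw).2
  have hncard : (T.neighborSet u).ncard = A₀.card + 1 := by
    rw [hNset, Set.ncard_coe_finset, Finset.card_insert_of_notMem hvA₀]
  have hrec := rec_main hgp hne A₀.card A₀ A₀ le_rfl (Finset.filter_subset _ _)
    Finset.Subset.rfl (fun x hx hx' => absurd hx hx')
  rw [hncard, Teq]
  simpa using hrec

end DS6

/-- If a geometric spanning tree `T` on a point set in general
position has an edge `{u,v}` such that every other edge is incident to `u` or to `v`,
then `T` can be made plane by at most `min(deg u, deg v) - 1` flips. -/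
theorem stmt11 (P : Finset Pt) (hgp : GenPos ↑P)
    (T : SimpleGraph {x : Pt // x ∈ P}) (hT : T.IsTree)
    (u v : {x : Pt // x ∈ P}) (huv : T.Adj u v)
    (hstar : ∀ a b, T.Adj a b → a = u ∨ a = v ∨ b = u ∨ b = v) :
    TreeFlipsToPlane Subtype.val T
      (min (T.neighborSet u).ncard (T.neighborSet v).ncard - 1) := by
  rcases le_total ((T.neighborSet u).ncard) ((T.neighborSet v).ncard) with h | h
  · rw [min_eq_left h]
    exact half P hgp T hT u v huv hstar
  · rw [min_eq_right h]
    refine half P hgp T hT v u huv.symm ?_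
    intro a b hab
    rcases hstar a b hab with h1 | h1 | h1 | h1
    · exact Or.inr (Or.inl h1)
    · exact Or.inl h1
    · exact Or.inr (Or.inr (Or.inr h1))
    · exact Or.inr (Or.inr (Or.inl h1))
end
end

section
/- For every integer d ≥ 2 there exists a finite point set P in the plane in general position and a geometric spanning tree T on P containing an edge {u,v} such that every other edge of T is incident to u or to v, min(deg(u), deg(v)) = d, and every sequence of flips transforming T into a plane spanning tree has length at least d − 1 (so the bound f(T) ≤ min(deg(u), deg(v)) − 1 is tight). -/
open EuclideanGeometry Real

noncomputable section

namespace Stmt12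
def pt2 (x y : ℝ) : Pt := WithLp.toLp 2 ![x, y]

variable (m : ℕ)

def Vc : ℝ := 2 ^ (m + 1)
def tc : ℝ := (4 * Vc m)⁻¹
def pu : Pt := pt2 0 0
def pv : Pt := pt2 (Vc m) 0
def av (i : ℕ) : ℝ := 2 ^ i
def pU (i : ℕ) : Pt := pt2 ((1 + tc m) * av i) ((1 + tc m) * av i ^ 2)
def pW (i : ℕ) : Pt := pt2 ((1 + tc m) * av i - tc m * Vc m) ((1 + tc m) * av i ^ 2)

lemma hV : 0 < Vc m := by unfold Vc; positivity
lemma ht : 0 < tc m := by unfold tc Vc; positivity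
lemma htV : tc m * Vc m = 1 / 4 := by
  have := (hV m).ne'
  unfold tc
  field_simp
lemma ht1 : tc m < 1 := by
  have h2 : (2:ℝ) ≤ Vc m := by
    unfold Vc
    calc (2:ℝ) = 2 ^ 1 := by norm_num
    _ ≤ 2 ^ (m+1) := by apply pow_le_pow_right₀ <;> norm_num
  rw [tc, inv_lt_one_iff₀]
  right; linarith
lemma hav1 (i : ℕ) : 1 ≤ av i := one_le_pow₀ (by norm_num)
lemma hav0 (i : ℕ) : 0 < av i := by unfold av; positivity
lemma havlt {i j : ℕ} (h : i < j) : 2 * av i ≤ av j := by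
  unfold av
  calc 2 * (2:ℝ)^i = 2^(i+1) := by ring
  _ ≤ 2^j := by apply pow_le_pow_right₀ (by norm_num) h
lemma hav_inj {i j : ℕ} (h : av i = av j) : i = j := by
  rcases lt_trichotomy i j with h'|h'|h'
  · have := havlt h'; have := hav0 i; linarith [h ▸ this]
  · exact h'
  · have := havlt h'; have := hav0 j; linarith [h ▸ this]
lemma havV {i : ℕ} (hi : i < m) : 4 * av i ≤ Vc m := by
  unfold av Vc
  calc 4 * (2:ℝ)^i = 2^(i+2) := by ring
  _ ≤ 2^(m+1) := by apply pow_le_pow_right₀ (by norm_num) (by omega)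

lemma h1t : (0:ℝ) < 1 + tc m := by have := ht m; linarith

lemma y_inj {i j : ℕ} (h : (1 + tc m) * av i ^ 2 = (1 + tc m) * av j ^ 2) : i = j := by
  have h1 := h1t m
  have h2 := hav0 i
  have h3 := hav0 j
  have h4 : (av i - av j) * (av i + av j) = 0 := by nlinarith
  rcases mul_eq_zero.1 h4 with h5 | h5
  · exact hav_inj (by linarith)
  · linarith

lemma hne_uv : pu ≠ pv m := by
  intro h
  have := congrArg (· 0) h
  simp [pu, pv, pt2] at this
  have := hV m; linarith
lemma hne_uU (i : ℕ) : pu ≠ pU m i := by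
  intro h
  have h1 := congrArg (· 1) h
  simp [pu, pU, pt2] at h1
  have := h1t m; have := hav0 i; rcases h1 with h1 | h1 <;> linarith
lemma hne_uW (i : ℕ) : pu ≠ pW m i := by
  intro h
  have h1 := congrArg (· 1) h
  simp [pu, pW, pt2] at h1
  have := h1t m; have := hav0 i; rcases h1 with h1 | h1 <;> linarith
lemma hne_vU (i : ℕ) : pv m ≠ pU m i := by
  intro h
  have h1 := congrArg (· 1) h
  simp [pv, pU, pt2] at h1
  have := h1t m; have := hav0 i; rcases h1 with h1 | h1 <;> linarith
lemma hne_vW (i : ℕ) : pv m ≠ pW m i := by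
  intro h
  have h1 := congrArg (· 1) h
  simp [pv, pW, pt2] at h1
  have := h1t m; have := hav0 i; rcases h1 with h1 | h1 <;> linarith
lemma hU_inj {i j : ℕ} (h : pU m i = pU m j) : i = j := by
  have h1 := congrArg (· 1) h
  simp only [pU, pt2] at h1
  exact y_inj m (by simpa using h1)
lemma hW_inj {i j : ℕ} (h : pW m i = pW m j) : i = j := by
  have h1 := congrArg (· 1) h
  simp only [pW, pt2] at h1
  exact y_inj m (by simpa using h1)
lemma hne_UW (i j : ℕ) : pU m i ≠ pW m j := by
  intro h
  have h1 := congrArg (· 1) h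
  simp only [pU, pW, pt2] at h1
  have hij : i = j := y_inj m (by simpa using h1)
  subst hij
  have h0 := congrArg (· 0) h
  simp only [pU, pW, pt2] at h0
  have h0' : (1 + tc m) * av i = (1 + tc m) * av i - tc m * Vc m := by simpa using h0
  have := htV m
  linarith

lemma mem_seg {x0 y0 x1 y1 : ℝ} {w : Pt} (hw : w ∈ openSegment ℝ (pt2 x0 y0) (pt2 x1 y1)) :
    ∃ θ : ℝ, 0 < θ ∧ θ < 1 ∧ w 0 = (1-θ)*x0 + θ*x1 ∧ w 1 = (1-θ)*y0 + θ*y1 := by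
  rw [openSegment_eq_image] at hw
  obtain ⟨θ, ⟨h0, h1⟩, rfl⟩ := hw
  exact ⟨θ, h0, h1, by simp [pt2], by simp [pt2]⟩

lemma seg_mem {x0 y0 x1 y1 θ : ℝ} (h0 : 0 < θ) (h1 : θ < 1) :
    pt2 ((1-θ)*x0 + θ*x1) ((1-θ)*y0 + θ*y1) ∈ openSegment ℝ (pt2 x0 y0) (pt2 x1 y1) := by
  rw [openSegment_eq_image]
  refine ⟨θ, ⟨h0, h1⟩, ?_⟩
  ext x
  fin_cases x <;> simp [pt2] <;> ring

lemma cross_diag {i : ℕ} (hi : i < m) :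
    SegCross pu (pU m i) (pv m) (pW m i) := by
  have h1 := h1t m
  have htv := htV m
  have ha0 := hav0 i
  have hV' := hV m
  refine ⟨hne_uU m i, hne_uv m, hne_uW m i, (hne_vU m i).symm, hne_UW m i i, hne_vW m i, ?_⟩
  have hθ0 : 0 < 1 / (1 + tc m) := by positivity
  have hθ1 : 1 / (1 + tc m) < 1 := by
    rw [div_lt_one h1]
    have := ht m; linarith
  refine ⟨pt2 (av i) (av i ^ 2), ?_, ?_⟩
  · have e0 : (1-(1 / (1 + tc m)))*0 + (1 / (1 + tc m))*((1 + tc m) * av i) = av i := by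
      field_simp
      ring
    have e1 : (1-(1 / (1 + tc m)))*0 + (1 / (1 + tc m))*((1 + tc m) * av i ^ 2) = av i ^ 2 := by
      field_simp
      ring
    have := seg_mem (x0 := 0) (y0 := 0) (x1 := (1 + tc m) * av i)
      (y1 := (1 + tc m) * av i ^ 2) hθ0 hθ1
    rw [e0, e1] at this
    exact this
  · have e0 : (1-(1 / (1 + tc m)))*(Vc m) + (1 / (1 + tc m))*((1 + tc m) * av i - tc m * Vc m) = av i := by
      field_simp
      ring
    have e1 : (1-(1 / (1 + tc m)))*0 + (1 / (1 + tc m))*((1 + tc m) * av i ^ 2) = av i ^ 2 := by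
      field_simp
      ring
    have := seg_mem (x0 := Vc m) (y0 := 0) (x1 := (1 + tc m) * av i - tc m * Vc m)
      (y1 := (1 + tc m) * av i ^ 2) hθ0 hθ1
    rw [e0, e1] at this
    exact this

lemma nocross {i j : ℕ} (hi : i < m) (hj : j < m) (hij : i ≠ j) :
    ¬ SegCross pu (pU m i) (pv m) (pW m j) := by
  rintro ⟨-, -, -, -, -, -, w, hw1, hw2⟩
  obtain ⟨θ, hθ0, hθ1, hx1, hy1⟩ := mem_seg (w := w) (by simpa [pu, pU] using hw1)
  obtain ⟨σ, hσ0, hσ1, hx2, hy2⟩ := mem_seg (w := w) (by simpa [pv, pW] using hw2)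
  have h1 := h1t m
  have htv := htV m
  have ht' := ht m
  have hV' := hV m
  have ha0 := hav0 i
  have hb0 := hav0 j
  have ha1 := hav1 i
  have hb1 := hav1 j
  rcases Nat.lt_or_ge i j with hlt | hge
  · -- i < j : x-coordinate separation
    have hab := havlt hlt   -- 2 * av i ≤ av j
    have hbV : av j < Vc m := by have := havV m hj; linarith
    -- w 0 < (1+t) av i
    have w0lt : w 0 < (1 + tc m) * av i := by
      have h2 : θ * ((1 + tc m) * av i) < 1 * ((1 + tc m) * av i) :=
        mul_lt_mul_of_pos_right hθ1 (mul_pos h1 ha0)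
      rw [hx1]; linarith
    -- w 0 > (1+t) av j - t V
    have w0gt : (1 + tc m) * av j - tc m * Vc m < w 0 := by
      have hVE : 0 < (1 + tc m) * (Vc m - av j) := mul_pos h1 (by linarith)
      have key : 0 < (1 - σ) * ((1 + tc m) * (Vc m - av j)) :=
        mul_pos (by linarith) hVE
      have expand : (1 - σ) * Vc m + σ * ((1 + tc m) * av j - tc m * Vc m)
          - ((1 + tc m) * av j - tc m * Vc m)
          = (1 - σ) * ((1 + tc m) * (Vc m - av j)) := by ring
      rw [hx2]; linarith [expand, key]
    have hmono : 0 ≤ tc m * (av j - av i) := mul_nonneg ht'.le (by linarith)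
    linarith
  · have hlt : j < i := lt_of_le_of_ne hge (Ne.symm hij)
    have hab := havlt hlt   -- 2 * av j ≤ av i
    -- functional F z = z 1 - av i * z 0
    have hF1 : w 1 - av i * w 0 = 0 := by rw [hx1, hy1]; ring
    have k1 : av i - av j ≤ av j * (av i - av j) := by
      nlinarith [mul_nonneg (by linarith : (0:ℝ) ≤ av j - 1) (by linarith : (0:ℝ) ≤ av i - av j)]
    have hXnn : 0 ≤ av j * (av i - av j) := mul_nonneg hb0.le (by linarith)
    have htX : 0 ≤ tc m * (av j * (av i - av j)) := mul_nonneg ht'.le hXnn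
    have hFW : (1 + tc m) * av j ^ 2 - av i * ((1 + tc m) * av j - tc m * Vc m) < 0 := by
      have e : (1 + tc m) * av j ^ 2 - av i * ((1 + tc m) * av j - tc m * Vc m)
          = -((1 + tc m) * (av j * (av i - av j))) + av i * (tc m * Vc m) := by ring
      rw [e, htv]
      linarith
    have t1 : σ * ((1 + tc m) * av j ^ 2 - av i * ((1 + tc m) * av j - tc m * Vc m)) < 0 :=
      mul_neg_of_pos_of_neg hσ0 hFW
    have t2 : 0 ≤ (1 - σ) * (av i * Vc m) :=
      mul_nonneg (by linarith) (by positivity)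
    have e2 : (1 - σ) * 0 + σ * ((1 + tc m) * av j ^ 2)
        - av i * ((1 - σ) * Vc m + σ * ((1 + tc m) * av j - tc m * Vc m))
        = σ * ((1 + tc m) * av j ^ 2 - av i * ((1 + tc m) * av j - tc m * Vc m))
          - (1 - σ) * (av i * Vc m) := by ring
    have : w 1 - av i * w 0 < 0 := by
      rw [hx2, hy2]; linarith [e2]
    linarith

lemma not_collinear_of_det (p q r : Pt)
    (h : (q 0 - p 0) * (r 1 - p 1) - (q 1 - p 1) * (r 0 - p 0) ≠ 0) :
    ¬ Collinear ℝ ({p, q, r} : Set Pt) := by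
  intro hc
  rw [collinear_iff_of_mem (Set.mem_insert p _)] at hc
  obtain ⟨v, hv⟩ := hc
  obtain ⟨rq, hq⟩ := hv q (by simp)
  obtain ⟨rr, hr⟩ := hv r (by simp)
  apply h
  have hq0 : q 0 = rq * v 0 + p 0 := by rw [hq]; rfl
  have hq1 : q 1 = rq * v 1 + p 1 := by rw [hq]; rfl
  have hr0 : r 0 = rr * v 0 + p 0 := by rw [hr]; rfl
  have hr1 : r 1 = rr * v 1 + p 1 := by rw [hr]; rfl
  rw [hq0, hq1, hr0, hr1]; ring

-- abbreviations for readability in the det computations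
section dets
-- basic facts bundles

lemma nc1 (i : ℕ) : ¬ Collinear ℝ ({pu, pv m, pU m i} : Set Pt) := by
  apply not_collinear_of_det
  simp only [pu, pv, pU, pt2, PiLp.toLp_apply, Matrix.cons_val_zero, Matrix.cons_val_one, Matrix.head_cons]
  have h1 := h1t m; have hV' := hV m; have ha := hav0 i
  intro h
  nlinarith [mul_pos hV' (mul_pos h1 (pow_pos ha 2))]

lemma nc2 (i : ℕ) : ¬ Collinear ℝ ({pu, pv m, pW m i} : Set Pt) := by
  apply not_collinear_of_det
  simp only [pu, pv, pW, pt2, PiLp.toLp_apply, Matrix.cons_val_zero, Matrix.cons_val_one, Matrix.head_cons]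
  have h1 := h1t m; have hV' := hV m; have ha := hav0 i
  intro h
  nlinarith [mul_pos hV' (mul_pos h1 (pow_pos ha 2))]

lemma nc3 {i j : ℕ} (hij : i ≠ j) : ¬ Collinear ℝ ({pu, pU m i, pU m j} : Set Pt) := by
  apply not_collinear_of_det
  simp only [pu, pU, pt2, PiLp.toLp_apply, Matrix.cons_val_zero, Matrix.cons_val_one, Matrix.head_cons]
  have h1 := h1t m; have ha := hav0 i; have hb := hav0 j
  intro h
  -- det = T^2 * a * b * (b - a)
  have e : ((1 + tc m) * av i - 0) * ((1 + tc m) * av j ^ 2 - 0)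
      - ((1 + tc m) * av i ^ 2 - 0) * ((1 + tc m) * av j - 0)
      = (1 + tc m) * (1 + tc m) * (av i * av j) * (av j - av i) := by ring
  rw [e] at h
  rcases Nat.lt_or_ge i j with hlt | hge
  · have := havlt hlt
    nlinarith [mul_pos (mul_pos (mul_pos h1 h1) (mul_pos ha hb)) (by linarith : (0:ℝ) < av j - av i)]
  · have hlt : j < i := lt_of_le_of_ne hge (Ne.symm hij)
    have := havlt hlt
    nlinarith [mul_pos (mul_pos (mul_pos h1 h1) (mul_pos ha hb)) (by linarith : (0:ℝ) < av i - av j)]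

lemma nc4 (i j : ℕ) : ¬ Collinear ℝ ({pu, pU m i, pW m j} : Set Pt) := by
  apply not_collinear_of_det
  simp only [pu, pU, pW, pt2, PiLp.toLp_apply, Matrix.cons_val_zero, Matrix.cons_val_one, Matrix.head_cons]
  have h1 := h1t m; have ha := hav0 i; have hb := hav0 j
  have ht' := ht m; have htv := htV m; have ha1 := hav1 i; have hb1 := hav1 j
  intro h
  have e : ((1 + tc m) * av i - 0) * ((1 + tc m) * av j ^ 2 - 0)
      - ((1 + tc m) * av i ^ 2 - 0) * ((1 + tc m) * av j - tc m * Vc m - 0)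
      = ((1 + tc m) * av i) *
        ((1 + tc m) * (av j * (av j - av i)) + av i * (tc m * Vc m)) := by ring
  rw [e, htv] at h
  rcases mul_eq_zero.1 h with h' | h'
  · nlinarith
  · rcases lt_trichotomy i j with hlt | heq | hlt
    · have hab := havlt hlt
      nlinarith [mul_nonneg (mul_nonneg h1.le hb.le) (by linarith : (0:ℝ) ≤ av j - av i)]
    · subst heq; nlinarith
    · have hab := havlt hlt
      have k1 : av i - av j ≤ av j * (av i - av j) := by
        nlinarith [mul_nonneg (by linarith : (0:ℝ) ≤ av j - 1) (by linarith : (0:ℝ) ≤ av i - av j)]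
      have k3 : 0 ≤ tc m * (av j * (av i - av j)) :=
        mul_nonneg ht'.le (mul_nonneg hb.le (by linarith))
      nlinarith

lemma nc5 {i j : ℕ} (hij : i ≠ j) : ¬ Collinear ℝ ({pu, pW m i, pW m j} : Set Pt) := by
  apply not_collinear_of_det
  simp only [pu, pW, pt2, PiLp.toLp_apply, Matrix.cons_val_zero, Matrix.cons_val_one, Matrix.head_cons]
  have h1 := h1t m; have ha := hav0 i; have hb := hav0 j
  have ht' := ht m; have htv := htV m; have ha1 := hav1 i; have hb1 := hav1 j
  intro h
  have e : ((1 + tc m) * av i - tc m * Vc m - 0) * ((1 + tc m) * av j ^ 2 - 0)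
      - ((1 + tc m) * av i ^ 2 - 0) * ((1 + tc m) * av j - tc m * Vc m - 0)
      = (1 + tc m) * ((av j - av i) *
        ((1 + tc m) * (av i * av j) - (tc m * Vc m) * (av i + av j))) := by ring
  rw [e, htv] at h
  have hne : av i ≠ av j := fun hh => hij (hav_inj hh)
  rcases mul_eq_zero.1 h with h' | h'
  · linarith
  rcases mul_eq_zero.1 h' with h' | h'
  · exact hne (by linarith)
  · have k1 : av i ≤ av i * av j := by nlinarith
    have k2 : av j ≤ av i * av j := by nlinarith
    have k3 : 0 ≤ tc m * (av i * av j) := mul_nonneg ht'.le (by positivity)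
    linarith

lemma nc6 {i j : ℕ} (hi : i < m) (hj : j < m) (hij : i ≠ j) :
    ¬ Collinear ℝ ({pv m, pU m i, pU m j} : Set Pt) := by
  apply not_collinear_of_det
  simp only [pv, pU, pt2, PiLp.toLp_apply, Matrix.cons_val_zero, Matrix.cons_val_one, Matrix.head_cons]
  have h1 := h1t m; have ha := hav0 i; have hb := hav0 j
  have ht' := ht m; have ht1' := ht1 m; have hV' := hV m
  have hiV := havV m hi; have hjV := havV m hj
  intro h
  have e : ((1 + tc m) * av i - Vc m) * ((1 + tc m) * av j ^ 2 - 0)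
      - ((1 + tc m) * av i ^ 2 - 0) * ((1 + tc m) * av j - Vc m)
      = (1 + tc m) * ((av j - av i) *
        ((1 + tc m) * (av i * av j) - Vc m * (av i + av j))) := by ring
  rw [e] at h
  have hne : av i ≠ av j := fun hh => hij (hav_inj hh)
  rcases mul_eq_zero.1 h with h' | h'
  · linarith
  rcases mul_eq_zero.1 h' with h' | h'
  · exact hne (by linarith)
  · have k1 : 0 ≤ (Vc m - 4 * av i) * av j := mul_nonneg (by linarith) hb.le
    have k2 : 0 ≤ (1 - tc m) * (av i * av j) :=
      mul_nonneg (by linarith) (by positivity)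
    have k3 : 0 < Vc m * av i := mul_pos hV' ha
    have k4 : 0 < Vc m * av j := mul_pos hV' hb
    linarith

lemma nc8 {i j : ℕ} (hi : i < m) (hj : j < m) (hij : i ≠ j) :
    ¬ Collinear ℝ ({pv m, pW m i, pW m j} : Set Pt) := by
  apply not_collinear_of_det
  simp only [pv, pW, pt2, PiLp.toLp_apply, Matrix.cons_val_zero, Matrix.cons_val_one, Matrix.head_cons]
  have h1 := h1t m; have ha := hav0 i; have hb := hav0 j
  have ht' := ht m; have ht1' := ht1 m; have hV' := hV m
  have hiV := havV m hi; have hjV := havV m hj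
  intro h
  have e : ((1 + tc m) * av i - tc m * Vc m - Vc m) * ((1 + tc m) * av j ^ 2 - 0)
      - ((1 + tc m) * av i ^ 2 - 0) * ((1 + tc m) * av j - tc m * Vc m - Vc m)
      = (1 + tc m) * ((1 + tc m) * ((av j - av i) *
        (av i * av j - Vc m * (av i + av j)))) := by ring
  rw [e] at h
  have hne : av i ≠ av j := fun hh => hij (hav_inj hh)
  rcases mul_eq_zero.1 h with h' | h'
  · linarith
  rcases mul_eq_zero.1 h' with h' | h'
  · linarith
  rcases mul_eq_zero.1 h' with h' | h'
  · exact hne (by linarith)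
  · have k1 : 0 ≤ (Vc m - 4 * av i) * av j := mul_nonneg (by linarith) hb.le
    have k3 : 0 < Vc m * av i := mul_pos hV' ha
    have k4 : 0 < Vc m * av j := mul_pos hV' hb
    linarith

lemma nc7 {i j : ℕ} (hi : i < m) (hj : j < m) :
    ¬ Collinear ℝ ({pv m, pU m i, pW m j} : Set Pt) := by
  apply not_collinear_of_det
  simp only [pv, pU, pW, pt2, PiLp.toLp_apply, Matrix.cons_val_zero, Matrix.cons_val_one, Matrix.head_cons]
  have h1 := h1t m; have ha := hav0 i; have hb := hav0 j
  have ht' := ht m; have ht1' := ht1 m; have hV' := hV m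
  have hiV := havV m hi; have hjV := havV m hj
  have htv := htV m
  intro h
  have e : ((1 + tc m) * av i - Vc m) * ((1 + tc m) * av j ^ 2 - 0)
      - ((1 + tc m) * av i ^ 2 - 0) * ((1 + tc m) * av j - tc m * Vc m - Vc m)
      = (1 + tc m) * ((1 + tc m) * (av i * av j * (av j - av i))
          + Vc m * ((1 + tc m) * av i ^ 2 - av j ^ 2)) := by
    have : tc m * Vc m + Vc m = (1 + tc m) * Vc m := by ring
    ring
  rw [e] at h
  rcases mul_eq_zero.1 h with h' | h'
  · linarith
  rcases lt_trichotomy i j with hlt | heq | hlt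
  · -- i < j : expression is negative
    have hab := havlt hlt
    have c1 : av i * (av j - av i) ≤ av j ^ 2 / 4 := by
      nlinarith [sq_nonneg (av j - 2 * av i)]
    have c2 : av j * (av i * (av j - av i)) ≤ av j * (av j ^ 2 / 4) :=
      mul_le_mul_of_nonneg_left c1 hb.le
    have Xnn : 0 ≤ av i * av j * (av j - av i) :=
      mul_nonneg (mul_nonneg ha.le hb.le) (by linarith)
    have f1 : (1 + tc m) * (av i * av j * (av j - av i))
        ≤ 2 * (av i * av j * (av j - av i)) :=
      mul_le_mul_of_nonneg_right (by linarith) Xnn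
    have k0 : 0 ≤ (1 - tc m) * av i ^ 2 := mul_nonneg (by linarith) (sq_nonneg _)
    have sq4 : 4 * av i ^ 2 ≤ av j ^ 2 := by nlinarith
    have f2 : (1 + tc m) * av i ^ 2 - av j ^ 2 ≤ -(av j ^ 2) / 2 := by nlinarith
    have f3 : Vc m * ((1 + tc m) * av i ^ 2 - av j ^ 2) ≤ Vc m * (-(av j ^ 2) / 2) :=
      mul_le_mul_of_nonneg_left f2 hV'.le
    have f4 : av j * av j ^ 2 ≤ (Vc m / 4) * av j ^ 2 :=
      mul_le_mul_of_nonneg_right (by linarith) (sq_nonneg _)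
    have k5 : 0 < Vc m * av j ^ 2 := by positivity
    linarith
  · subst heq
    have : 0 < tc m * (Vc m * av i ^ 2) := by positivity
    nlinarith
  · -- j < i : expression is positive
    have hab := havlt hlt
    have c1 : av j * (av i - av j) ≤ av i ^ 2 / 4 := by
      nlinarith [sq_nonneg (av i - 2 * av j)]
    have c2 : av i * (av j * (av i - av j)) ≤ av i * (av i ^ 2 / 4) :=
      mul_le_mul_of_nonneg_left c1 ha.le
    have Ynn : 0 ≤ av i * av j * (av i - av j) :=
      mul_nonneg (mul_nonneg ha.le hb.le) (by linarith)
    have f1 : (1 + tc m) * (av i * av j * (av i - av j))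
        ≤ 2 * (av i * av j * (av i - av j)) :=
      mul_le_mul_of_nonneg_right (by linarith) Ynn
    have f4 : av i * av i ^ 2 ≤ (Vc m / 4) * av i ^ 2 :=
      mul_le_mul_of_nonneg_right (by linarith) (sq_nonneg _)
    have sq4 : 4 * av j ^ 2 ≤ av i ^ 2 := by nlinarith
    have k0 : 0 ≤ tc m * av i ^ 2 := mul_nonneg ht'.le (sq_nonneg _)
    have f2 : Vc m * ((3/4) * av i ^ 2) ≤ Vc m * ((1 + tc m) * av i ^ 2 - av j ^ 2) :=
      mul_le_mul_of_nonneg_left (by linarith) hV'.le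
    have k5 : 0 < Vc m * av i ^ 2 := by positivity
    linarith

lemma nc9 {i j k : ℕ} (hij : i ≠ j) (hik : i ≠ k) (hjk : j ≠ k) :
    ¬ Collinear ℝ ({pU m i, pU m j, pU m k} : Set Pt) := by
  apply not_collinear_of_det
  simp only [pU, pt2, PiLp.toLp_apply, Matrix.cons_val_zero, Matrix.cons_val_one, Matrix.head_cons]
  have h1 := h1t m
  intro h
  have e : ((1 + tc m) * av j - (1 + tc m) * av i) * ((1 + tc m) * av k ^ 2 - (1 + tc m) * av i ^ 2)
      - ((1 + tc m) * av j ^ 2 - (1 + tc m) * av i ^ 2) * ((1 + tc m) * av k - (1 + tc m) * av i)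
      = (1 + tc m) * ((1 + tc m) * ((av j - av i) * ((av k - av i) * (av k - av j)))) := by ring
  rw [e] at h
  rcases mul_eq_zero.1 h with h' | h'
  · linarith
  rcases mul_eq_zero.1 h' with h' | h'
  · linarith
  rcases mul_eq_zero.1 h' with h' | h'
  · exact hij (hav_inj (by linarith))
  rcases mul_eq_zero.1 h' with h' | h'
  · exact hik (hav_inj (by linarith))
  · exact hjk (hav_inj (by linarith))

lemma nc10 {i j k : ℕ} (hij : i ≠ j) (hik : i ≠ k) (hjk : j ≠ k) :
    ¬ Collinear ℝ ({pW m i, pW m j, pW m k} : Set Pt) := by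
  apply not_collinear_of_det
  simp only [pW, pt2, PiLp.toLp_apply, Matrix.cons_val_zero, Matrix.cons_val_one, Matrix.head_cons]
  have h1 := h1t m
  intro h
  have e : ((1 + tc m) * av j - tc m * Vc m - ((1 + tc m) * av i - tc m * Vc m))
        * ((1 + tc m) * av k ^ 2 - (1 + tc m) * av i ^ 2)
      - ((1 + tc m) * av j ^ 2 - (1 + tc m) * av i ^ 2)
        * ((1 + tc m) * av k - tc m * Vc m - ((1 + tc m) * av i - tc m * Vc m))
      = (1 + tc m) * ((1 + tc m) * ((av j - av i) * ((av k - av i) * (av k - av j)))) := by ring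
  rw [e] at h
  rcases mul_eq_zero.1 h with h' | h'
  · linarith
  rcases mul_eq_zero.1 h' with h' | h'
  · linarith
  rcases mul_eq_zero.1 h' with h' | h'
  · exact hij (hav_inj (by linarith))
  rcases mul_eq_zero.1 h' with h' | h'
  · exact hik (hav_inj (by linarith))
  · exact hjk (hav_inj (by linarith))

lemma aux11 {x y k : ℕ} (hxy : x < y) :
    (1 + tc m) * ((av k - av x) * (av k - av y)) + (av x + av y) / 4 ≠ 0 := by
  have h1 := h1t m; have ht' := ht m
  have hx0 := hav0 x; have hy0 := hav0 y; have hk0 := hav0 k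
  have hx1 := hav1 x; have hy1 := hav1 y; have hk1 := hav1 k
  have hxy' := havlt hxy
  intro h
  rcases lt_trichotomy k x with hkx | hkx | hkx
  · -- av k < av x < av y : product positive
    have h2 := havlt hkx
    have pos : 0 < (av x - av k) * (av y - av k) :=
      mul_pos (by linarith) (by linarith)
    nlinarith
  · subst hkx; nlinarith
  · rcases lt_trichotomy k y with hky | hky | hky
    · -- x < k < y : strictly between
      have h2 := havlt hkx   -- 2 av x ≤ av k
      have h3 := havlt hky   -- 2 av k ≤ av y
      have p3 : (av k / 2) * (av y / 2) ≤ (av k - av x) * (av y - av k) :=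
        mul_le_mul (by linarith) (by linarith) (by linarith) (by linarith)
      have p4 : av y / 2 ≤ (av k / 2) * (av y / 2) := by nlinarith
      have tX : 0 ≤ tc m * ((av k - av x) * (av y - av k)) :=
        mul_nonneg ht'.le (mul_nonneg (by linarith) (by linarith))
      nlinarith
    · subst hky; nlinarith
    · -- av y < av k : product positive
      have h2 := havlt hky
      have pos : 0 < (av k - av x) * (av k - av y) :=
        mul_pos (by linarith) (by linarith)
      nlinarith

lemma aux12 {x y z : ℕ} (hyz : y < z) :
    (1 + tc m) * ((av x - av y) * (av x - av z)) - (av y + av z) / 4 ≠ 0 := by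
  have h1 := h1t m; have ht' := ht m
  have hx0 := hav0 x; have hy0 := hav0 y; have hz0 := hav0 z
  have hx1 := hav1 x; have hy1 := hav1 y; have hz1 := hav1 z
  have hyz' := havlt hyz
  intro h
  rcases lt_trichotomy x y with hxy | hxy | hxy
  · -- av x < av y < av z
    have h2 := havlt hxy   -- 2 av x ≤ av y
    have hy2 : 2 ≤ av y := by linarith
    have hz2 : 2 ≤ av z := by linarith
    have p3 : (av y / 2) * (av z / 2) ≤ (av y - av x) * (av z - av x) :=
      mul_le_mul (by linarith) (by linarith) (by linarith) (by linarith)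
    have pbc : av y + av z ≤ av y * av z := by nlinarith [mul_nonneg (by linarith : (0:ℝ) ≤ av y - 1) (by linarith : (0:ℝ) ≤ av z - 1)]
    have tX : 0 < tc m * ((av y - av x) * (av z - av x)) :=
      mul_pos ht' (mul_pos (by linarith) (by linarith))
    nlinarith
  · subst hxy; nlinarith
  · rcases lt_trichotomy x z with hxz | hxz | hxz
    · -- y < x < z : between, expression negative
      have h2 := havlt hxy   -- 2 av y ≤ av x
      have h3 := havlt hxz   -- 2 av x ≤ av z
      have neg : 0 < (av x - av y) * (av z - av x) :=
        mul_pos (by linarith) (by linarith)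
      nlinarith
    · subst hxz; nlinarith
    · -- x > z > y
      have h2 := havlt hxz   -- 2 av z ≤ av x
      have hx2 : 2 ≤ av x := by linarith
      have p3 : (av x / 2) * (av x / 2) ≤ (av x - av y) * (av x - av z) :=
        mul_le_mul (by linarith) (by linarith) (by linarith) (by linarith)
      have tX : 0 < tc m * ((av x - av y) * (av x - av z)) :=
        mul_pos ht' (mul_pos (by linarith) (by linarith))
      nlinarith

lemma nc11 {i j : ℕ} (hij : i ≠ j) (k : ℕ) :
    ¬ Collinear ℝ ({pU m i, pU m j, pW m k} : Set Pt) := by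
  apply not_collinear_of_det
  simp only [pU, pW, pt2, PiLp.toLp_apply, Matrix.cons_val_zero, Matrix.cons_val_one, Matrix.head_cons]
  have h1 := h1t m; have htv := htV m
  intro h
  have e : ((1 + tc m) * av j - (1 + tc m) * av i) * ((1 + tc m) * av k ^ 2 - (1 + tc m) * av i ^ 2)
      - ((1 + tc m) * av j ^ 2 - (1 + tc m) * av i ^ 2)
        * ((1 + tc m) * av k - tc m * Vc m - (1 + tc m) * av i)
      = (1 + tc m) * ((av j - av i) *
          ((1 + tc m) * ((av k - av i) * (av k - av j)) + (tc m * Vc m) * (av i + av j))) := by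
    ring
  rw [e, htv] at h
  rcases mul_eq_zero.1 h with h' | h'
  · linarith
  rcases mul_eq_zero.1 h' with h' | h'
  · exact hij (hav_inj (by linarith))
  · rcases Nat.lt_or_ge i j with hlt | hge
    · exact aux11 m (x := i) (y := j) (k := k) hlt (by linarith)
    · have hlt : j < i := lt_of_le_of_ne hge (Ne.symm hij)
      exact aux11 m (x := j) (y := i) (k := k) hlt (by linarith)

lemma nc12 (i : ℕ) {j k : ℕ} (hjk : j ≠ k) :
    ¬ Collinear ℝ ({pU m i, pW m j, pW m k} : Set Pt) := by
  apply not_collinear_of_det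
  simp only [pU, pW, pt2, PiLp.toLp_apply, Matrix.cons_val_zero, Matrix.cons_val_one, Matrix.head_cons]
  have h1 := h1t m; have htv := htV m
  intro h
  have e : ((1 + tc m) * av j - tc m * Vc m - (1 + tc m) * av i)
        * ((1 + tc m) * av k ^ 2 - (1 + tc m) * av i ^ 2)
      - ((1 + tc m) * av j ^ 2 - (1 + tc m) * av i ^ 2)
        * ((1 + tc m) * av k - tc m * Vc m - (1 + tc m) * av i)
      = (1 + tc m) * ((av k - av j) *
          ((1 + tc m) * ((av i - av j) * (av i - av k)) - (tc m * Vc m) * (av j + av k))) := by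
    ring
  rw [e, htv] at h
  rcases mul_eq_zero.1 h with h' | h'
  · linarith
  rcases mul_eq_zero.1 h' with h' | h'
  · exact hjk (hav_inj (by linarith))
  · rcases Nat.lt_or_ge j k with hlt | hge
    · exact aux12 m (x := i) (y := j) (z := k) hlt (by linarith)
    · have hlt : k < j := lt_of_le_of_ne hge (Ne.symm hjk)
      exact aux12 m (x := i) (y := k) (z := j) hlt (by linarith)

local instance : DecidableEq Pt := Classical.decEq _

def P : Finset Pt :=
  ({pu, pv m} : Finset Pt) ∪ (Finset.range m).image (pU m) ∪ (Finset.range m).image (pW m)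

lemma mem_P {x : Pt} : x ∈ P m ↔
    x = pu ∨ x = pv m ∨ (∃ i, i < m ∧ x = pU m i) ∨ (∃ i, i < m ∧ x = pW m i) := by
  simp only [P, Finset.mem_union, Finset.mem_insert, Finset.mem_singleton,
    Finset.mem_image, Finset.mem_range]
  aesop

lemma ncol_perm₁ {p q r : Pt} (h : ¬ Collinear ℝ ({p, q, r} : Set Pt)) :
    ¬ Collinear ℝ ({q, p, r} : Set Pt) := by
  intro hc
  apply h
  have e : ({p, q, r} : Set Pt) = {q, p, r} := by
    ext w; simp only [Set.mem_insert_iff, Set.mem_singleton_iff]; tauto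
  rw [e]; exact hc

lemma ncol_perm₂ {p q r : Pt} (h : ¬ Collinear ℝ ({p, q, r} : Set Pt)) :
    ¬ Collinear ℝ ({p, r, q} : Set Pt) := by
  intro hc
  apply h
  have e : ({p, q, r} : Set Pt) = {p, r, q} := by
    ext w; simp only [Set.mem_insert_iff, Set.mem_singleton_iff]; tauto
  rw [e]; exact hc
lemma genPos : GenPos (↑(P m) : Set Pt) := by
  intro p hp q hq r hr hpq hpr hqr
  rw [Finset.mem_coe] at hp hq hr
  rcases (mem_P m).1 hp with rfl | rfl | ⟨i, hi, rfl⟩ | ⟨i, hi, rfl⟩ <;>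
    rcases (mem_P m).1 hq with rfl | rfl | ⟨j, hj, rfl⟩ | ⟨j, hj, rfl⟩ <;>
      rcases (mem_P m).1 hr with rfl | rfl | ⟨k, hk, rfl⟩ | ⟨k, hk, rfl⟩
  · -- (0, 0, 0)
    exact absurd rfl hpq
  · -- (0, 0, 1)
    exact absurd rfl hpq
  · -- (0, 0, 2)
    exact absurd rfl hpq
  · -- (0, 0, 3)
    exact absurd rfl hpq
  · -- (0, 1, 0)
    exact absurd rfl hpr
  · -- (0, 1, 1)
    exact absurd rfl hqr
  · -- (0, 1, 2)
    exact nc1 m k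
  · -- (0, 1, 3)
    exact nc2 m k
  · -- (0, 2, 0)
    exact absurd rfl hpr
  · -- (0, 2, 1)
    exact ncol_perm₂ (nc1 m j)
  · -- (0, 2, 2)
    have hne12 : j ≠ k := fun hh => hqr (by rw [hh])
    exact nc3 m hne12
  · -- (0, 2, 3)
    exact nc4 m j k
  · -- (0, 3, 0)
    exact absurd rfl hpr
  · -- (0, 3, 1)
    exact ncol_perm₂ (nc2 m j)
  · -- (0, 3, 2)
    exact ncol_perm₂ (nc4 m k j)
  · -- (0, 3, 3)
    have hne12 : j ≠ k := fun hh => hqr (by rw [hh])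
    exact nc5 m hne12
  · -- (1, 0, 0)
    exact absurd rfl hqr
  · -- (1, 0, 1)
    exact absurd rfl hpr
  · -- (1, 0, 2)
    exact ncol_perm₁ (nc1 m k)
  · -- (1, 0, 3)
    exact ncol_perm₁ (nc2 m k)
  · -- (1, 1, 0)
    exact absurd rfl hpq
  · -- (1, 1, 1)
    exact absurd rfl hpq
  · -- (1, 1, 2)
    exact absurd rfl hpq
  · -- (1, 1, 3)
    exact absurd rfl hpq
  · -- (1, 2, 0)
    exact ncol_perm₂ (ncol_perm₁ (nc1 m j))
  · -- (1, 2, 1)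
    exact absurd rfl hpr
  · -- (1, 2, 2)
    have hne12 : j ≠ k := fun hh => hqr (by rw [hh])
    exact nc6 m hj hk hne12
  · -- (1, 2, 3)
    exact nc7 m hj hk
  · -- (1, 3, 0)
    exact ncol_perm₂ (ncol_perm₁ (nc2 m j))
  · -- (1, 3, 1)
    exact absurd rfl hpr
  · -- (1, 3, 2)
    exact ncol_perm₂ (nc7 m hk hj)
  · -- (1, 3, 3)
    have hne12 : j ≠ k := fun hh => hqr (by rw [hh])
    exact nc8 m hj hk hne12
  · -- (2, 0, 0)
    exact absurd rfl hqr
  · -- (2, 0, 1)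
    exact ncol_perm₁ (ncol_perm₂ (nc1 m i))
  · -- (2, 0, 2)
    have hne12 : i ≠ k := fun hh => hpr (by rw [hh])
    exact ncol_perm₁ (nc3 m hne12)
  · -- (2, 0, 3)
    exact ncol_perm₁ (nc4 m i k)
  · -- (2, 1, 0)
    exact ncol_perm₁ (ncol_perm₂ (ncol_perm₁ (nc1 m i)))
  · -- (2, 1, 1)
    exact absurd rfl hqr
  · -- (2, 1, 2)
    have hne12 : i ≠ k := fun hh => hpr (by rw [hh])
    exact ncol_perm₁ (nc6 m hi hk hne12)
  · -- (2, 1, 3)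
    exact ncol_perm₁ (nc7 m hi hk)
  · -- (2, 2, 0)
    have hne12 : i ≠ j := fun hh => hpq (by rw [hh])
    exact ncol_perm₂ (ncol_perm₁ (nc3 m hne12))
  · -- (2, 2, 1)
    have hne12 : i ≠ j := fun hh => hpq (by rw [hh])
    exact ncol_perm₂ (ncol_perm₁ (nc6 m hi hj hne12))
  · -- (2, 2, 2)
    have hne01 : i ≠ j := fun hh => hpq (by rw [hh])
    have hne02 : i ≠ k := fun hh => hpr (by rw [hh])
    have hne12 : j ≠ k := fun hh => hqr (by rw [hh])
    exact nc9 m hne01 hne02 hne12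
  · -- (2, 2, 3)
    have hne01 : i ≠ j := fun hh => hpq (by rw [hh])
    exact nc11 m hne01 k
  · -- (2, 3, 0)
    exact ncol_perm₂ (ncol_perm₁ (nc4 m i j))
  · -- (2, 3, 1)
    exact ncol_perm₂ (ncol_perm₁ (nc7 m hi hj))
  · -- (2, 3, 2)
    have hne01 : i ≠ k := fun hh => hpr (by rw [hh])
    exact ncol_perm₂ (nc11 m hne01 j)
  · -- (2, 3, 3)
    have hne12 : j ≠ k := fun hh => hqr (by rw [hh])
    exact nc12 m i hne12
  · -- (3, 0, 0)
    exact absurd rfl hqr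
  · -- (3, 0, 1)
    exact ncol_perm₁ (ncol_perm₂ (nc2 m i))
  · -- (3, 0, 2)
    exact ncol_perm₁ (ncol_perm₂ (nc4 m k i))
  · -- (3, 0, 3)
    have hne12 : i ≠ k := fun hh => hpr (by rw [hh])
    exact ncol_perm₁ (nc5 m hne12)
  · -- (3, 1, 0)
    exact ncol_perm₁ (ncol_perm₂ (ncol_perm₁ (nc2 m i)))
  · -- (3, 1, 1)
    exact absurd rfl hqr
  · -- (3, 1, 2)
    exact ncol_perm₁ (ncol_perm₂ (nc7 m hk hi))
  · -- (3, 1, 3)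
    have hne12 : i ≠ k := fun hh => hpr (by rw [hh])
    exact ncol_perm₁ (nc8 m hi hk hne12)
  · -- (3, 2, 0)
    exact ncol_perm₁ (ncol_perm₂ (ncol_perm₁ (nc4 m j i)))
  · -- (3, 2, 1)
    exact ncol_perm₁ (ncol_perm₂ (ncol_perm₁ (nc7 m hj hi)))
  · -- (3, 2, 2)
    have hne01 : j ≠ k := fun hh => hqr (by rw [hh])
    exact ncol_perm₁ (ncol_perm₂ (nc11 m hne01 i))
  · -- (3, 2, 3)
    have hne12 : i ≠ k := fun hh => hpr (by rw [hh])
    exact ncol_perm₁ (nc12 m j hne12)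
  · -- (3, 3, 0)
    have hne12 : i ≠ j := fun hh => hpq (by rw [hh])
    exact ncol_perm₂ (ncol_perm₁ (nc5 m hne12))
  · -- (3, 3, 1)
    have hne12 : i ≠ j := fun hh => hpq (by rw [hh])
    exact ncol_perm₂ (ncol_perm₁ (nc8 m hi hj hne12))
  · -- (3, 3, 2)
    have hne12 : i ≠ j := fun hh => hpq (by rw [hh])
    exact ncol_perm₂ (ncol_perm₁ (nc12 m k hne12))
  · -- (3, 3, 3)
    have hne01 : i ≠ j := fun hh => hpq (by rw [hh])
    have hne02 : i ≠ k := fun hh => hpr (by rw [hh])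
    have hne12 : j ≠ k := fun hh => hqr (by rw [hh])
    exact nc10 m hne01 hne02 hne12

abbrev VT := {x : Pt // x ∈ P m}

def uX : VT m := ⟨pu, by rw [mem_P]; tauto⟩
def vX : VT m := ⟨pv m, by rw [mem_P]; tauto⟩
def fU (i : Fin m) : VT m := ⟨pU m i, by rw [mem_P]; exact Or.inr (Or.inr (Or.inl ⟨i, i.2, rfl⟩))⟩
def fW (i : Fin m) : VT m := ⟨pW m i, by rw [mem_P]; exact Or.inr (Or.inr (Or.inr ⟨i, i.2, rfl⟩))⟩

def Rel (p q : Pt) : Prop :=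
  (p = pu ∧ (q = pv m ∨ ∃ i, i < m ∧ q = pU m i)) ∨
  (q = pu ∧ (p = pv m ∨ ∃ i, i < m ∧ p = pU m i)) ∨
  (p = pv m ∧ ∃ i, i < m ∧ q = pW m i) ∨
  (q = pv m ∧ ∃ i, i < m ∧ p = pW m i)

def T : SimpleGraph (VT m) where
  Adj x y := Rel m x.1 y.1
  symm := by
    constructor
    rintro x y (⟨h1, h2⟩ | ⟨h1, h2⟩ | ⟨h1, h2⟩ | ⟨h1, h2⟩)
    · exact Or.inr (Or.inl ⟨h1, h2⟩)
    · exact Or.inl ⟨h1, h2⟩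
    · exact Or.inr (Or.inr (Or.inr ⟨h1, h2⟩))
    · exact Or.inr (Or.inr (Or.inl ⟨h1, h2⟩))
  loopless := by
    constructor
    rintro ⟨x, hx⟩ (⟨rfl, (h | ⟨i, hi, h⟩)⟩ | ⟨rfl, (h | ⟨i, hi, h⟩)⟩ |
      ⟨rfl, ⟨i, hi, h⟩⟩ | ⟨rfl, ⟨i, hi, h⟩⟩)
    · exact hne_uv m h
    · exact hne_uU m i h
    · exact hne_uv m h
    · exact hne_uU m i h
    · exact hne_vW m i h
    · exact hne_vW m i h

lemma adjT {x y : VT m} : (T m).Adj x y ↔ Rel m x.1 y.1 := Iff.rfl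

lemma rel_u {w : Pt} : Rel m pu w ↔ (w = pv m ∨ ∃ i, i < m ∧ w = pU m i) := by
  constructor
  · rintro (⟨-, h⟩ | ⟨rfl, (h | ⟨i, hi, h⟩)⟩ | ⟨h, -⟩ | ⟨-, ⟨i, hi, h⟩⟩)
    · exact h
    · exact absurd h (hne_uv m)
    · exact absurd h (hne_uU m i)
    · exact absurd h (hne_uv m)
    · exact absurd h (hne_uW m i)
  · intro h; exact Or.inl ⟨rfl, h⟩

lemma rel_v {w : Pt} : Rel m (pv m) w ↔ (w = pu ∨ ∃ i, i < m ∧ w = pW m i) := by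
  constructor
  · rintro (⟨h, -⟩ | ⟨rfl, -⟩ | ⟨-, h⟩ | ⟨rfl, ⟨i, hi, h⟩⟩)
    · exact absurd h.symm (hne_uv m)
    · exact Or.inl rfl
    · exact Or.inr h
    · exact absurd h (hne_vW m i)
  · rintro (rfl | ⟨i, hi, rfl⟩)
    · exact Or.inr (Or.inl ⟨rfl, Or.inl rfl⟩)
    · exact Or.inr (Or.inr (Or.inl ⟨rfl, ⟨i, hi, rfl⟩⟩))

lemma rel_U {i : ℕ} {w : Pt} (h : Rel m (pU m i) w) : w = pu := by
  rcases h with ⟨h, -⟩ | ⟨rfl, -⟩ | ⟨h, -⟩ | ⟨-, ⟨j, hj, h⟩⟩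
  · exact absurd h.symm (hne_uU m i)
  · rfl
  · exact absurd h.symm (hne_vU m i)
  · exact absurd h (hne_UW m i j)

lemma rel_W {i : ℕ} {w : Pt} (h : Rel m (pW m i) w) : w = pv m := by
  rcases h with ⟨h, -⟩ | ⟨-, (h | ⟨j, hj, h⟩)⟩ | ⟨h, -⟩ | ⟨rfl, -⟩
  · exact absurd h.symm (hne_uW m i)
  · exact absurd h.symm (hne_vW m i)
  · exact absurd h.symm (hne_UW m j i)
  · exact absurd h.symm (hne_vW m i)
  · rfl

lemma adj_uv : (T m).Adj (uX m) (vX m) := Or.inl ⟨rfl, Or.inl rfl⟩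

lemma adj_uU (i : Fin m) : (T m).Adj (uX m) (fU m i) :=
  Or.inl ⟨rfl, Or.inr ⟨i, i.2, rfl⟩⟩

lemma adj_vW (i : Fin m) : (T m).Adj (vX m) (fW m i) :=
  Or.inr (Or.inr (Or.inl ⟨rfl, ⟨i, i.2, rfl⟩⟩))

lemma reach_u (x : VT m) : (T m).Reachable x (uX m) := by
  rcases (mem_P m).1 x.2 with h | h | ⟨i, hi, h⟩ | ⟨i, hi, h⟩
  · rw [show x = uX m from Subtype.ext h]
  · rw [show x = vX m from Subtype.ext h]
    exact ((T m).adj_symm (adj_uv m)).reachable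
  · rw [show x = fU m ⟨i, hi⟩ from Subtype.ext h]
    exact ((T m).adj_symm (adj_uU m ⟨i, hi⟩)).reachable
  · rw [show x = fW m ⟨i, hi⟩ from Subtype.ext h]
    exact (((T m).adj_symm (adj_vW m ⟨i, hi⟩)).reachable).trans
      ((adj_uv m).symm.reachable)

lemma conn : (T m).Connected := by
  rw [SimpleGraph.connected_iff]
  refine ⟨fun x y => (reach_u m x).trans (reach_u m y).symm, ⟨uX m⟩⟩

lemma leaf_nbr {x w w' : VT m} (hx1 : x ≠ uX m) (hx2 : x ≠ vX m)
    (h : (T m).Adj x w) (h' : (T m).Adj x w') : w = w' := by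
  rcases (mem_P m).1 x.2 with hv | hv | ⟨i, hi, hv⟩ | ⟨i, hi, hv⟩
  · exact absurd (Subtype.ext hv) hx1
  · exact absurd (Subtype.ext hv) hx2
  · have h1 : (w : Pt) = pu := rel_U m (by rw [← hv]; exact h)
    have h2 : (w' : Pt) = pu := rel_U m (by rw [← hv]; exact h')
    exact Subtype.ext (h1.trans h2.symm)
  · have h1 : (w : Pt) = pv m := rel_W m (by rw [← hv]; exact h)
    have h2 : (w' : Pt) = pv m := rel_W m (by rw [← hv]; exact h')
    exact Subtype.ext (h1.trans h2.symm)

lemma acyclic : (T m).IsAcyclic := by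
  intro v c hc
  classical
  -- find a support vertex different from uX and vX
  have hnd : c.support.tail.Nodup := hc.2
  have hlen : 3 ≤ c.support.tail.length := by
    have := hc.three_le_length
    have h2 : c.support.length = c.length + 1 := SimpleGraph.Walk.length_support c
    have h3 : c.support.tail.length = c.support.length - 1 := List.length_tail
    omega
  have hcard : 3 ≤ c.support.tail.toFinset.card := by
    rw [List.toFinset_card_of_nodup hnd]; exact hlen
  have hex : ∃ x ∈ c.support.tail, x ≠ uX m ∧ x ≠ vX m := by
    by_contra hcon
    push_neg at hcon
    have hsub : c.support.tail.toFinset ⊆ {uX m, vX m} := by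
      intro x hx
      by_cases hxu : x = uX m
      · simp [hxu]
      · simp [hcon x (List.mem_toFinset.1 hx) hxu]
    have := Finset.card_le_card hsub
    have h2 : ({uX m, vX m} : Finset (VT m)).card ≤ 2 := Finset.card_insert_le _ _ |>.trans (by simp)
    omega
  obtain ⟨x, hxL, hxu, hxv⟩ := hex
  have hxs : x ∈ c.support := List.mem_of_mem_tail hxL
  have hc' := hc.rotate hxs
  set c' := c.rotate x hxs with hc'def
  have hlen' : 3 ≤ c'.length := hc'.three_le_length
  cases hcc : c' with
  | nil => rw [hcc] at hlen'; simp at hlen'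
  | cons hadj q =>
    rename_i y
    rw [hcc] at hc' hlen'
    -- q : Walk y x ; examine q.reverse
    cases hqq : q.reverse with
    | nil =>
      have : q.length = 0 := by
        have := congrArg SimpleGraph.Walk.length hqq
        simpa using this
      simp [SimpleGraph.Walk.length_cons, this] at hlen'
    | cons hadj2 q2 =>
      rename_i z
      -- hadj2 : Adj x z
      have hyz : y = z := leaf_nbr m hxu hxv hadj hadj2
      subst hyz
      have hmem : s(x, y) ∈ q.reverse.edges := by
        rw [hqq]; simp
      rw [SimpleGraph.Walk.edges_reverse, List.mem_reverse] at hmem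
      have hnodup : (SimpleGraph.Walk.cons hadj q).edges.Nodup := hc'.edges_nodup
      rw [SimpleGraph.Walk.edges_cons] at hnodup
      exact (List.nodup_cons.1 hnodup).1 hmem

lemma isTree : (T m).IsTree := ⟨conn m, acyclic m⟩

lemma fU_inj {i j : Fin m} (h : fU m i = fU m j) : i = j :=
  Fin.ext (hU_inj m (congrArg Subtype.val h))

lemma fW_inj {i j : Fin m} (h : fW m i = fW m j) : i = j :=
  Fin.ext (hW_inj m (congrArg Subtype.val h))

lemma nb_u : (T m).neighborSet (uX m) = insert (vX m) (Set.range (fU m)) := by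
  ext y
  simp only [SimpleGraph.mem_neighborSet, Set.mem_insert_iff, Set.mem_range]
  have hbr : (T m).Adj (uX m) y ↔ Rel m pu y.1 := Iff.rfl
  rw [hbr, rel_u]
  constructor
  · rintro (h | ⟨i, hi, h⟩)
    · exact Or.inl (Subtype.ext h)
    · exact Or.inr ⟨⟨i, hi⟩, (Subtype.ext h).symm⟩
  · rintro (rfl | ⟨i, rfl⟩)
    · exact Or.inl rfl
    · exact Or.inr ⟨i, i.2, rfl⟩

lemma nb_v : (T m).neighborSet (vX m) = insert (uX m) (Set.range (fW m)) := by
  ext y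
  simp only [SimpleGraph.mem_neighborSet, Set.mem_insert_iff, Set.mem_range]
  have hbr : (T m).Adj (vX m) y ↔ Rel m (pv m) y.1 := Iff.rfl
  rw [hbr, rel_v]
  constructor
  · rintro (h | ⟨i, hi, h⟩)
    · exact Or.inl (Subtype.ext h)
    · exact Or.inr ⟨⟨i, hi⟩, (Subtype.ext h).symm⟩
  · rintro (rfl | ⟨i, rfl⟩)
    · exact Or.inl rfl
    · exact Or.inr ⟨i, i.2, rfl⟩

lemma ncard_range_fU : (Set.range (fU m)).ncard = m := by
  rw [← Set.image_univ, Set.ncard_image_of_injective _ (fun i j h => fU_inj m h),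
    Set.ncard_univ, Nat.card_eq_fintype_card, Fintype.card_fin]

lemma ncard_range_fW : (Set.range (fW m)).ncard = m := by
  rw [← Set.image_univ, Set.ncard_image_of_injective _ (fun i j h => fW_inj m h),
    Set.ncard_univ, Nat.card_eq_fintype_card, Fintype.card_fin]

lemma ncard_nb_u : ((T m).neighborSet (uX m)).ncard = m + 1 := by
  rw [nb_u]
  have h1 : vX m ∉ Set.range (fU m) := by
    rintro ⟨i, h⟩
    exact hne_vU m i (congrArg Subtype.val h).symm
  rw [Set.ncard_insert_of_notMem h1 (Set.toFinite _), ncard_range_fU]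

lemma ncard_nb_v : ((T m).neighborSet (vX m)).ncard = m + 1 := by
  rw [nb_v]
  have h1 : uX m ∉ Set.range (fW m) := by
    rintro ⟨i, h⟩
    exact hne_uW m i (congrArg Subtype.val h).symm
  rw [Set.ncard_insert_of_notMem h1 (Set.toFinite _), ncard_range_fW]

lemma domin (a b : VT m) (h : (T m).Adj a b) :
    a = uX m ∨ a = vX m ∨ b = uX m ∨ b = vX m := by
  rcases h with ⟨h, -⟩ | ⟨h, -⟩ | ⟨h, -⟩ | ⟨h, -⟩
  · exact Or.inl (Subtype.ext h)
  · exact Or.inr (Or.inr (Or.inl (Subtype.ext h)))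
  · exact Or.inr (Or.inl (Subtype.ext h))
  · exact Or.inr (Or.inr (Or.inr (Subtype.ext h)))

lemma segCross_swap₁ {a b c d : Pt} (h : SegCross a b c d) : SegCross b a c d := by
  obtain ⟨h1, h2, h3, h4, h5, h6, w, hw1, hw2⟩ := h
  exact ⟨h1.symm, h4, h5, h2, h3, h6, w, by rw [openSegment_symm]; exact hw1, hw2⟩

lemma segCross_swap₂ {a b c d : Pt} (h : SegCross a b c d) : SegCross a b d c := by
  obtain ⟨h1, h2, h3, h4, h5, h6, w, hw1, hw2⟩ := h
  exact ⟨h1, h3, h2, h5, h4, h6.symm, w, hw1, by rw [openSegment_symm]; exact hw2⟩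

lemma segCross_pairs {a b c d : Pt} (h : SegCross a b c d) : SegCross c d a b := by
  obtain ⟨h1, h2, h3, h4, h5, h6, w, hw1, hw2⟩ := h
  exact ⟨h6, h2.symm, h4.symm, h3.symm, h5.symm, h1, w, hw2, hw1⟩

def Sset (G : SimpleGraph (VT m)) : Set (Fin m) :=
  {i | s(uX m, fU m i) ∈ G.edgeSet ∧ s(vX m, fW m i) ∈ G.edgeSet}

lemma cross_special (i : Fin m) :
    SegCross ((uX m) : Pt) (fU m i) (vX m) (fW m i) :=
  cross_diag m i.2

lemma cross_eq {i j : Fin m}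
    (h : SegCross ((uX m) : Pt) (fU m i) (vX m) (fW m j)) : i = j := by
  by_contra hne
  exact nocross m i.2 j.2 (fun hh => hne (Fin.ext hh)) h

lemma kill_same {e : Sym2 (VT m)} {i j : Fin m}
    (h1 : s(uX m, fU m i) = e ∨ s(vX m, fW m i) = e)
    (h2 : s(uX m, fU m j) = e ∨ s(vX m, fW m j) = e) : i = j := by
  rcases h1 with h1 | h1 <;> rcases h2 with h2 | h2 <;> rw [← h2] at h1
  · rcases Sym2.eq_iff.1 h1 with ⟨-, h⟩ | ⟨h, -⟩
    · exact fU_inj m h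
    · exact absurd (congrArg Subtype.val h) (hne_uU m j)
  · rcases Sym2.eq_iff.1 h1 with ⟨h, -⟩ | ⟨h, -⟩
    · exact absurd (congrArg Subtype.val h) (hne_uv m)
    · exact absurd (congrArg Subtype.val h) (hne_uW m j)
  · rcases Sym2.eq_iff.1 h1 with ⟨h, -⟩ | ⟨h, -⟩
    · exact absurd (congrArg Subtype.val h).symm (hne_uv m)
    · exact absurd (congrArg Subtype.val h) (hne_vU m j)
  · rcases Sym2.eq_iff.1 h1 with ⟨-, h⟩ | ⟨h, -⟩
    · exact fW_inj m h
    · exact absurd (congrArg Subtype.val h) (hne_vW m j)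

lemma kill2 {x y z w : VT m} (hcross : SegCross (x : Pt) y z w) {i j : Fin m}
    (hi : s(uX m, fU m i) = s(x, y) ∨ s(vX m, fW m i) = s(x, y))
    (hj : s(uX m, fU m j) = s(z, w) ∨ s(vX m, fW m j) = s(z, w)) : i = j := by
  rcases hi with hi | hi <;> rcases hj with hj | hj
  · -- both u-type: impossible, the two crossing segments would share pu
    rcases Sym2.eq_iff.1 hi with ⟨rfl, rfl⟩ | ⟨rfl, rfl⟩ <;>
      rcases Sym2.eq_iff.1 hj with ⟨rfl, rfl⟩ | ⟨rfl, rfl⟩ <;>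
        obtain ⟨c1, c2, c3, c4, c5, c6, -⟩ := hcross
    · exact absurd rfl c2
    · exact absurd rfl c3
    · exact absurd rfl c4
    · exact absurd rfl c5
  · -- i via u-type on (x,y), j via v-type on (z,w)
    rcases Sym2.eq_iff.1 hi with ⟨rfl, rfl⟩ | ⟨rfl, rfl⟩ <;>
      rcases Sym2.eq_iff.1 hj with ⟨rfl, rfl⟩ | ⟨rfl, rfl⟩
    · exact cross_eq m hcross
    · exact cross_eq m (segCross_swap₂ hcross)
    · exact cross_eq m (segCross_swap₁ hcross)
    · exact cross_eq m (segCross_swap₂ (segCross_swap₁ hcross))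
  · -- i via v-type on (x,y), j via u-type on (z,w)
    rcases Sym2.eq_iff.1 hi with ⟨rfl, rfl⟩ | ⟨rfl, rfl⟩ <;>
      rcases Sym2.eq_iff.1 hj with ⟨rfl, rfl⟩ | ⟨rfl, rfl⟩
    · exact (cross_eq m (segCross_pairs hcross)).symm
    · exact (cross_eq m (segCross_swap₁ (segCross_pairs hcross))).symm
    · exact (cross_eq m (segCross_swap₂ (segCross_pairs hcross))).symm
    · exact (cross_eq m (segCross_swap₁ (segCross_swap₂ (segCross_pairs hcross)))).symm
  · -- both v-type: impossible, share pv
    rcases Sym2.eq_iff.1 hi with ⟨rfl, rfl⟩ | ⟨rfl, rfl⟩ <;>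
      rcases Sym2.eq_iff.1 hj with ⟨rfl, rfl⟩ | ⟨rfl, rfl⟩ <;>
        obtain ⟨c1, c2, c3, c4, c5, c6, -⟩ := hcross
    · exact absurd rfl c2
    · exact absurd rfl c3
    · exact absurd rfl c4
    · exact absurd rfl c5

lemma step {G G' : SimpleGraph (VT m)} (h : TreeFlip Subtype.val G G') :
    (Sset m G).ncard ≤ (Sset m G').ncard + 1 := by
  classical
  obtain ⟨x, y, z, w, hxy, hzw, hcross, e1, e2, he1, he2, hne, hE, -⟩ := h
  set K := Sset m G \ Sset m G' with hK
  have hkill : ∀ i ∈ K,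
      (s(uX m, fU m i) = s(x, y) ∨ s(uX m, fU m i) = s(z, w)) ∨
      (s(vX m, fW m i) = s(x, y) ∨ s(vX m, fW m i) = s(z, w)) := by
    rintro i ⟨⟨hu, hv⟩, hnot⟩
    by_contra hcon
    push_neg at hcon
    refine hnot ⟨?_, ?_⟩
    · show s(uX m, fU m i) ∈ G'.edgeSet
      rw [hE]
      exact Or.inl ⟨hu, by
        simp only [Set.mem_insert_iff, Set.mem_singleton_iff]
        push_neg
        exact hcon.1⟩
    · show s(vX m, fW m i) ∈ G'.edgeSet
      rw [hE]
      exact Or.inl ⟨hv, by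
        simp only [Set.mem_insert_iff, Set.mem_singleton_iff]
        push_neg
        exact hcon.2⟩
  have hsing : ∀ i ∈ K, ∀ j ∈ K, i = j := by
    intro i hi j hj
    have ki := hkill i hi
    have kj := hkill j hj
    have ki' : s(uX m, fU m i) = s(x, y) ∨ s(vX m, fW m i) = s(x, y) ∨
        s(uX m, fU m i) = s(z, w) ∨ s(vX m, fW m i) = s(z, w) := by tauto
    have kj' : s(uX m, fU m j) = s(x, y) ∨ s(vX m, fW m j) = s(x, y) ∨
        s(uX m, fU m j) = s(z, w) ∨ s(vX m, fW m j) = s(z, w) := by tauto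
    rcases ki' with ki' | ki' | ki' | ki' <;> rcases kj' with kj' | kj' | kj' | kj'
    · exact kill_same m (Or.inl ki') (Or.inl kj')
    · exact kill_same m (Or.inl ki') (Or.inr kj')
    · exact kill2 m hcross (Or.inl ki') (Or.inl kj')
    · exact kill2 m hcross (Or.inl ki') (Or.inr kj')
    · exact kill_same m (Or.inr ki') (Or.inl kj')
    · exact kill_same m (Or.inr ki') (Or.inr kj')
    · exact kill2 m hcross (Or.inr ki') (Or.inl kj')
    · exact kill2 m hcross (Or.inr ki') (Or.inr kj')
    · exact kill2 m (segCross_pairs hcross) (Or.inl ki') (Or.inl kj')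
    · exact kill2 m (segCross_pairs hcross) (Or.inl ki') (Or.inr kj')
    · exact kill_same m (Or.inl ki') (Or.inl kj')
    · exact kill_same m (Or.inl ki') (Or.inr kj')
    · exact kill2 m (segCross_pairs hcross) (Or.inr ki') (Or.inl kj')
    · exact kill2 m (segCross_pairs hcross) (Or.inr ki') (Or.inr kj')
    · exact kill_same m (Or.inr ki') (Or.inl kj')
    · exact kill_same m (Or.inr ki') (Or.inr kj')
  have hK1 : K.ncard ≤ 1 := by
    rw [Set.ncard_le_one (Set.toFinite _)]
    exact hsing
  have hsub : Sset m G ⊆ Sset m G' ∪ K := by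
    intro i hi
    by_cases h' : i ∈ Sset m G'
    · exact Or.inl h'
    · exact Or.inr ⟨hi, h'⟩
  calc (Sset m G).ncard ≤ (Sset m G' ∪ K).ncard :=
        Set.ncard_le_ncard hsub (Set.toFinite _)
    _ ≤ (Sset m G').ncard + K.ncard := Set.ncard_union_le _ _
    _ ≤ (Sset m G').ncard + 1 := by omega

lemma sset_T : Sset m (T m) = Set.univ := by
  ext i
  simp only [Sset, Set.mem_setOf_eq, Set.mem_univ, iff_true]
  exact ⟨(SimpleGraph.mem_edgeSet _).2 (adj_uU m i), (SimpleGraph.mem_edgeSet _).2 (adj_vW m i)⟩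

lemma sset_plane {G : SimpleGraph (VT m)} (h : TreePlane Subtype.val G) :
    Sset m G = ∅ := by
  rw [Set.eq_empty_iff_forall_notMem]
  rintro i ⟨h1, h2⟩
  exact h (uX m) (fU m i) (vX m) (fW m i)
    ((SimpleGraph.mem_edgeSet _).1 h1) ((SimpleGraph.mem_edgeSet _).1 h2) (cross_special m i)

lemma lower_bound (j : ℕ) (g : ℕ → SimpleGraph (VT m)) (hg0 : g 0 = T m)
    (hstep : ∀ i < j, TreeFlip Subtype.val (g i) (g (i + 1)))
    (hplane : TreePlane Subtype.val (g j)) : m ≤ j := by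
  have key : ∀ k, k ≤ j → m ≤ (Sset m (g k)).ncard + k := by
    intro k
    induction k with
    | zero =>
      intro _
      rw [hg0, sset_T, Set.ncard_univ, Nat.card_eq_fintype_card, Fintype.card_fin]
      omega
    | succ n ih =>
      intro hn
      have h1 := ih (by omega)
      have h2 := step m (hstep n (by omega))
      omega
  have := key j le_rfl
  rw [sset_plane m hplane] at this
  simpa using this

end dets

end Stmt12

/-- For every `d ≥ 2` there is a point set in general position and a
geometric spanning tree `T` on it, having an edge `{u,v}` such that every other edge is
incident to `u` or to `v` and `min(deg u, deg v) = d`, for which every sequence of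
flips transforming `T` into a plane spanning tree has length at least `d - 1`. -/
theorem stmt12 (d : ℕ) (hd : 2 ≤ d) :
    ∃ P : Finset Pt, GenPos ↑P ∧
      ∃ (T : SimpleGraph {x : Pt // x ∈ P}) (u v : {x : Pt // x ∈ P}),
        T.IsTree ∧ T.Adj u v ∧
        (∀ a b, T.Adj a b → a = u ∨ a = v ∨ b = u ∨ b = v) ∧
        min (T.neighborSet u).ncard (T.neighborSet v).ncard = d ∧
        ∀ (j : ℕ) (g : ℕ → SimpleGraph {x : Pt // x ∈ P}),
          g 0 = T → (∀ i < j, TreeFlip Subtype.val (g i) (g (i + 1))) →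
          TreePlane Subtype.val (g j) → d - 1 ≤ j := by
  refine ⟨Stmt12.P (d-1), Stmt12.genPos (d-1), Stmt12.T (d-1), Stmt12.uX (d-1),
    Stmt12.vX (d-1), Stmt12.isTree _, Stmt12.adj_uv _, Stmt12.domin _, ?_, ?_⟩
  · rw [Stmt12.ncard_nb_u, Stmt12.ncard_nb_v, min_self]
    omega
  · intro j g hg0 hsteps hplane
    have := Stmt12.lower_bound (d-1) j g hg0 hsteps hplane
    omega
end
end
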